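/- arXiv:2409.03886 — 9 statements merged into one kernel-verified Lean document; each statement's English description precedes it below -/
import Mathlib

section
/- Let t₀ < T ≤ ∞, let A₃ : [t₀, T) → (0, ∞) be differentiable and nondecreasing, let f : [t₀, T) → ℝ be continuous, and let g : [t₀, T) → ℝ be differentiable with g'(t) = (A₃'(t)/A₃(t)) g(t) − f(t)² for all t ∈ [t₀, T). If g(t₀) < 0, then g(t) ≤ g(t₀) < 0 for all t ∈ [t₀, T). -/
/-!
Dividing by `A₃` removes the linear term: `(g / A₃)' = -f² / A₃ ≤ 0`, so `g / A₃` is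
nonincreasing. Hence `g t ≤ (g t₀ / A₃ t₀) · A₃ t`, and since `g t₀ / A₃ t₀ < 0` while `A₃` is
nondecreasing, the right-hand side is at most `g t₀`.
-/

open Set

theorem ordConnected_setOf_le_and_coe_lt (t₀ : ℝ) (T : EReal) :
    OrdConnected {t : ℝ | t₀ ≤ t ∧ (t : EReal) < T} :=
  ordConnected_Ici.inter (ordConnected_Iio.preimage_mono fun _ _ h => EReal.coe_le_coe_iff.2 h)

theorem HasDerivWithinAt.div_of_eq_div_mul_sub {g A : ℝ → ℝ} {a c x : ℝ} {s : Set ℝ}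
    (hg : HasDerivWithinAt g (a / A x * g x - c) s x) (hA : HasDerivWithinAt A a s x)
    (hAx : A x ≠ 0) : HasDerivWithinAt (fun t => g t / A t) (-c / A x) s x :=
  (hg.div hA hAx).congr_deriv (by field_simp; ring)

theorem antitoneOn_div_of_hasDerivWithinAt {D : Set ℝ} (hD : Convex ℝ D) {g A A' c : ℝ → ℝ}
    (hA : ∀ t ∈ D, 0 < A t) (hA' : ∀ t ∈ D, HasDerivWithinAt A (A' t) D t)
    (hc : ∀ t ∈ D, 0 ≤ c t) (hg : ∀ t ∈ D, HasDerivWithinAt g (A' t / A t * g t - c t) D t) :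
    AntitoneOn (fun t => g t / A t) D := by
  have hquot : ∀ t ∈ D, HasDerivWithinAt (fun t => g t / A t) (-c t / A t) D t :=
    fun t ht => (hg t ht).div_of_eq_div_mul_sub (hA' t ht) (hA t ht).ne'
  refine antitoneOn_of_hasDerivWithinAt_nonpos hD
    (fun t ht => (hquot t ht).continuousWithinAt)
    (fun t ht => (hquot t (interior_subset ht)).mono interior_subset) fun t ht => ?_
  have ht' := interior_subset ht
  exact div_nonpos_of_nonpos_of_nonneg (neg_nonpos.2 (hc t ht')) (hA t ht').le

theorem le_of_div_le_div_of_nonpos {a b x y : ℝ} (hab : b / y ≤ a / x) (hx : 0 < x) (hxy : x ≤ y)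
    (ha : a ≤ 0) : b ≤ a := by
  have hy : 0 < y := hx.trans_le hxy
  calc b = b / y * y := by field_simp
    _ ≤ a / x * y := by gcongr
    _ ≤ a / x * x := mul_le_mul_of_nonpos_left hxy (div_nonpos_of_nonpos_of_nonneg ha hx.le)
    _ = a := by field_simp

theorem negativity_preserved_general (t₀ : ℝ) (T : EReal) (hT : (t₀ : EReal) < T)
    (A₃ A₃' f g : ℝ → ℝ)
    (hA₃pos : ∀ t, t₀ ≤ t → (t : EReal) < T → 0 < A₃ t)
    (hA₃deriv : ∀ t, t₀ ≤ t → (t : EReal) < T →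
      HasDerivWithinAt A₃ (A₃' t) {t : ℝ | t₀ ≤ t ∧ (t : EReal) < T} t)
    (hA₃mono : MonotoneOn A₃ {t : ℝ | t₀ ≤ t ∧ (t : EReal) < T})
    (hg : ∀ t, t₀ ≤ t → (t : EReal) < T →
      HasDerivWithinAt g (A₃' t / A₃ t * g t - (f t) ^ 2)
        {t : ℝ | t₀ ≤ t ∧ (t : EReal) < T} t)
    (h0 : g t₀ < 0) :
    ∀ t, t₀ ≤ t → (t : EReal) < T → g t ≤ g t₀ ∧ g t < 0 := by
  intro t ht htT
  have hanti : AntitoneOn (fun t => g t / A₃ t) {t : ℝ | t₀ ≤ t ∧ (t : EReal) < T} :=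
    antitoneOn_div_of_hasDerivWithinAt (ordConnected_setOf_le_and_coe_lt t₀ T).convex
      (fun t ht => hA₃pos t ht.1 ht.2) (fun t ht => hA₃deriv t ht.1 ht.2)
      (fun t _ => sq_nonneg (f t)) (fun t ht => hg t ht.1 ht.2)
  have ht₀D : t₀ ∈ {t : ℝ | t₀ ≤ t ∧ (t : EReal) < T} := ⟨le_rfl, hT⟩
  have htD : t ∈ {t : ℝ | t₀ ≤ t ∧ (t : EReal) < T} := ⟨ht, htT⟩
  have hle : g t ≤ g t₀ := le_of_div_le_div_of_nonpos (hanti ht₀D htD ht) (hA₃pos t₀ le_rfl hT)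
    (hA₃mono ht₀D htD ht) h0.le
  exact ⟨hle, hle.trans_lt h0⟩

/-- Let `t₀ < T ≤ ∞`, let `A₃ : [t₀, T) → (0, ∞)` be differentiable and
nondecreasing, `f` continuous, and `g` differentiable with
`g' = (A₃'/A₃) g − f²` on `[t₀, T)`. If `g(t₀) < 0`, then `g(t) ≤ g(t₀) < 0` on `[t₀, T)`. -/
theorem negativity_preserved (t₀ : ℝ) (T : EReal) (hT : (t₀ : EReal) < T)
    (A₃ A₃' f g : ℝ → ℝ)
    (hA₃pos : ∀ t, t₀ ≤ t → (t : EReal) < T → 0 < A₃ t)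
    (hA₃deriv : ∀ t, t₀ ≤ t → (t : EReal) < T →
      HasDerivWithinAt A₃ (A₃' t) {t : ℝ | t₀ ≤ t ∧ (t : EReal) < T} t)
    (hA₃mono : MonotoneOn A₃ {t : ℝ | t₀ ≤ t ∧ (t : EReal) < T})
    (hf : ContinuousOn f {t : ℝ | t₀ ≤ t ∧ (t : EReal) < T})
    (hg : ∀ t, t₀ ≤ t → (t : EReal) < T →
      HasDerivWithinAt g (A₃' t / A₃ t * g t - (f t) ^ 2)
        {t : ℝ | t₀ ≤ t ∧ (t : EReal) < T} t)
    (h0 : g t₀ < 0) :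
    ∀ t, t₀ ≤ t → (t : EReal) < T → g t ≤ g t₀ ∧ g t < 0 :=
  negativity_preserved_general t₀ T hT A₃ A₃' f g hA₃pos hA₃deriv hA₃mono hg h0
end

section
/- Let ℓ > 0, let g : [t₀, ∞) → ℝ be continuous with g(t) → G_∞ as t → ∞, let β : [t₀, ∞) → ℝ be continuous with β(t) → 1/ℓ as t → ∞, and let f : [t₀, ∞) → ℝ be differentiable, bounded, with f(t₀) > 0 and f'(t) = (β(t) − g(t)) f(t) for all t. Then G_∞ ≥ 1/ℓ. -/
open Filter Set MeasureTheory Real Topology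

/-!
Write `φ = β - g`, so that `f' = φ f`. The integrating factor gives
`f t = f t₀ · exp (∫ φ)`. If `G_∞ < 1/ℓ`, then `φ` is eventually bounded below by a positive
constant, so `∫ φ` and hence `f` tend to `+∞`, contradicting the boundedness of `f`.
-/

theorem intervalIntegrable_of_continuousOn_Ici {φ : ℝ → ℝ} {a b c : ℝ}
    (hφ : ContinuousOn φ (Ici a)) (hb : a ≤ b) (hc : a ≤ c) :
    IntervalIntegrable φ volume b c :=
  (hφ.mono fun _ hx => le_trans (le_min hb hc) hx.1).intervalIntegrable

theorem hasDerivWithinAt_integral_Ici {φ : ℝ → ℝ} {a t : ℝ}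
    (hφ : ContinuousOn φ (Ici a)) (ht : a ≤ t) :
    HasDerivWithinAt (fun u => ∫ s in a..u, φ s) (φ t) (Ici t) t := by
  have hIoi : Ioi t ⊆ Ici a := fun _ hx => ht.trans (le_of_lt hx)
  exact intervalIntegral.integral_hasDerivWithinAt_right
    (intervalIntegrable_of_continuousOn_Ici hφ le_rfl ht) (t := Ioi t)
    ⟨Ici a, mem_of_superset self_mem_nhdsWithin hIoi,
      hφ.aestronglyMeasurable measurableSet_Ici⟩
    ((hφ t ht).mono hIoi)

theorem eq_mul_exp_integral_of_hasDerivWithinAt {φ f : ℝ → ℝ} {a t : ℝ}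
    (hφ : ContinuousOn φ (Ici a))
    (hf : ∀ t ∈ Ici a, HasDerivWithinAt f (φ t * f t) (Ici a) t) (ht : a ≤ t) :
    f t = f a * exp (∫ s in a..t, φ s) := by
  set F : ℝ → ℝ := fun u => ∫ s in a..u, φ s
  have hF_cont : ContinuousOn F (Icc a t) := by
    have := intervalIntegral.continuousOn_primitive_interval'
      (intervalIntegrable_of_continuousOn_Ici hφ le_rfl ht) left_mem_uIcc
    rwa [uIcc_of_le ht] at this
  have hf_cont : ContinuousOn f (Icc a t) := fun x hx =>
    (hf x hx.1).continuousWithinAt.mono Icc_subset_Ici_self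
  have h_deriv : ∀ x ∈ Ico a t,
      HasDerivWithinAt (fun u => f u * exp (-F u)) 0 (Ici x) x := by
    intro x hx
    have h_prod : HasDerivWithinAt (fun u => f u * exp (-F u))
        (φ x * f x * exp (-F x) + f x * (exp (-F x) * -φ x)) (Ici x) x :=
      ((hf x hx.1).mono (Ici_subset_Ici.2 hx.1)).mul (hasDerivWithinAt_integral_Ici hφ hx.1).neg.exp
    convert h_prod using 1
    ring
  have h_const : f t * exp (-F t) = f a * exp (-F a) :=
    constant_of_has_deriv_right_zero (hf_cont.mul hF_cont.neg.rexp) h_deriv t ⟨ht, le_rfl⟩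
  have hF_a : F a = 0 := intervalIntegral.integral_same
  rw [hF_a, neg_zero, exp_zero, mul_one] at h_const
  rw [← h_const, mul_assoc, ← exp_add, neg_add_cancel, exp_zero, mul_one]

theorem tendsto_integral_atTop_of_eventually_ge {φ : ℝ → ℝ} {a ε : ℝ}
    (hφ : ContinuousOn φ (Ici a)) (hε : 0 < ε) (hφε : ∀ᶠ t in atTop, ε ≤ φ t) :
    Tendsto (fun t => ∫ s in a..t, φ s) atTop atTop := by
  obtain ⟨T, hT⟩ := (hφε.and (eventually_ge_atTop a)).exists_forall_of_atTop
  have h_lower : ∀ t ≥ T, (∫ s in a..T, φ s) + ε * (t - T) ≤ ∫ s in a..t, φ s := by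
    intro t ht
    have haT := (hT T le_rfl).2
    have h_int : IntervalIntegrable φ volume T t :=
      intervalIntegrable_of_continuousOn_Ici hφ haT (haT.trans ht)
    have h_mono : ε * (t - T) ≤ ∫ s in T..t, φ s := by
      simpa [mul_comm] using intervalIntegral.integral_mono_on ht intervalIntegrable_const h_int
        fun x hx => (hT x hx.1).1
    rw [← intervalIntegral.integral_add_adjacent_intervals
      (intervalIntegrable_of_continuousOn_Ici hφ le_rfl haT) h_int]
    linarith
  refine tendsto_atTop_mono' _ (eventually_ge_atTop T |>.mono h_lower) ?_
  exact tendsto_atTop_add_const_left _ _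
    ((tendsto_id.atTop_add tendsto_const_nhds).const_mul_atTop hε)

theorem tendsto_atTop_of_hasDerivWithinAt_mul {φ f : ℝ → ℝ} {a c : ℝ}
    (hφ : ContinuousOn φ (Ici a)) (hc : 0 < c) (hφc : Tendsto φ atTop (𝓝 c))
    (hf : ∀ t ∈ Ici a, HasDerivWithinAt f (φ t * f t) (Ici a) t) (hfa : 0 < f a) :
    Tendsto f atTop atTop := by
  have h_int := tendsto_integral_atTop_of_eventually_ge hφ (half_pos hc)
    (hφc.eventually (eventually_ge_nhds (half_lt_self hc)))
  refine ((tendsto_exp_atTop.comp h_int).const_mul_atTop hfa).congr' ?_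
  filter_upwards [eventually_ge_atTop a] with t ht
  exact (eq_mul_exp_integral_of_hasDerivWithinAt hφ hf ht).symm

theorem mass_lower_bound_general (t₀ ℓ Ginf : ℝ)
    (g β f : ℝ → ℝ)
    (hgcont : ContinuousOn g (Set.Ici t₀))
    (hglim : Tendsto g atTop (nhds Ginf))
    (hβcont : ContinuousOn β (Set.Ici t₀))
    (hβlim : Tendsto β atTop (nhds (1 / ℓ)))
    (hfderiv : ∀ t ∈ Set.Ici t₀, HasDerivWithinAt f ((β t - g t) * f t) (Set.Ici t₀) t)
    (hfbdd : ∃ M : ℝ, ∀ t ∈ Set.Ici t₀, |f t| ≤ M)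
    (hf0 : f t₀ > 0) :
    Ginf ≥ 1 / ℓ := by
  by_contra! hlt
  have hf_top : Tendsto f atTop atTop :=
    tendsto_atTop_of_hasDerivWithinAt_mul (hβcont.sub hgcont) (sub_pos.2 hlt)
      (hβlim.sub hglim) hfderiv hf0
  obtain ⟨M, hM⟩ := hfbdd
  obtain ⟨t, hMt, ht⟩ := ((hf_top.eventually_gt_atTop M).and (eventually_ge_atTop t₀)).exists
  linarith [le_abs_self (f t), hM t ht]

/-- Let `ℓ > 0`, `g → G_∞`, `β → 1/ℓ`, and let `f` be differentiable,
bounded, with `f(t₀) > 0` and `f' = (β − g) f`. Then `G_∞ ≥ 1/ℓ`. -/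
theorem mass_lower_bound (t₀ ℓ Ginf : ℝ) (hℓ : 0 < ℓ)
    (g β f : ℝ → ℝ)
    (hgcont : ContinuousOn g (Set.Ici t₀))
    (hglim : Tendsto g atTop (nhds Ginf))
    (hβcont : ContinuousOn β (Set.Ici t₀))
    (hβlim : Tendsto β atTop (nhds (1 / ℓ)))
    (hfderiv : ∀ t ∈ Set.Ici t₀, HasDerivWithinAt f ((β t - g t) * f t) (Set.Ici t₀) t)
    (hfbdd : ∃ M : ℝ, ∀ t ∈ Set.Ici t₀, |f t| ≤ M)
    (hf0 : f t₀ > 0) :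
    Ginf ≥ 1 / ℓ :=
  mass_lower_bound_general t₀ ℓ Ginf g β f hgcont hglim hβcont hβlim hfderiv hfbdd hf0
end

section
/- Let A₃ : [t₀, ∞) → (0, ∞) be differentiable and nondecreasing with limit ℓ ∈ (0, ∞) as t → ∞, let f : [t₀, ∞) → ℝ be continuous, and let g : [t₀, ∞) → ℝ be differentiable and bounded with g'(t) = (A₃'(t)/A₃(t)) g(t) − f(t)², and set G_∞ = lim_{t→∞} g(t). Then ∫_t^∞ f(s)²/A₃(s) ds is finite for every t ≥ t₀ and g(t) = A₃(t) · ( G_∞/ℓ + ∫_t^∞ f(s)²/A₃(s) ds ) for all t ≥ t₀. -/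
/-!
Dividing by `A₃` removes the linear term of the equation for `g`: the quotient `g / A₃` has
derivative `-f² / A₃ ≤ 0` and tends to `G_∞ / ℓ`. A monotone function with a limit at infinity
has an integrable derivative on every half-line, and integrating the derivative from `t` to `∞`
gives the representation.
-/

open Filter MeasureTheory Set Topology

theorem HasDerivWithinAt.div_of_eq_logDeriv_mul_sub {a g : ℝ → ℝ} {a' q t : ℝ} {s : Set ℝ}
    (ha : HasDerivWithinAt a a' s t) (hg : HasDerivWithinAt g (a' / a t * g t - q) s t)
    (hat : a t ≠ 0) : HasDerivWithinAt (fun x => g x / a x) (-(q / a t)) s t := by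
  refine (hg.div ha hat).congr_deriv ?_
  field_simp
  ring

theorem integrableOn_Ioi_and_integral_eq_of_hasDerivWithinAt_neg {h φ : ℝ → ℝ} {t₀ t L : ℝ}
    (hderiv : ∀ x ∈ Ici t₀, HasDerivWithinAt h (-φ x) (Ici t₀) x)
    (hφ : ∀ x ∈ Ioi t₀, 0 ≤ φ x) (hlim : Tendsto h atTop (𝓝 L)) (ht : t₀ ≤ t) :
    IntegrableOn φ (Ioi t) ∧ ∫ x in Ioi t, φ x = h t - L := by
  have hcont : ContinuousWithinAt (-h) (Ici t) t :=
    ((hderiv t ht).continuousWithinAt.mono (Ici_subset_Ici.mpr ht)).neg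
  have hderiv' : ∀ x ∈ Ioi t, HasDerivAt (-h) (φ x) x := fun x hx => by
    simpa using ((hderiv x (ht.trans hx.out.le)).hasDerivAt
      (Ici_mem_nhds (ht.trans_lt hx))).neg
  have hφ' : ∀ x ∈ Ioi t, 0 ≤ φ x := fun x hx => hφ x (ht.trans_lt hx)
  refine ⟨integrableOn_Ioi_deriv_of_nonneg hcont hderiv' hφ' hlim.neg, ?_⟩
  rw [integral_Ioi_of_hasDerivAt_of_nonneg hcont hderiv' hφ' hlim.neg, Pi.neg_apply]
  ring

theorem integral_representation_general (t₀ ℓ Ginf : ℝ) (hℓ : 0 < ℓ)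
    (A₃ A₃' f g : ℝ → ℝ)
    (hA₃pos : ∀ t ∈ Set.Ici t₀, 0 < A₃ t)
    (hA₃deriv : ∀ t ∈ Set.Ici t₀, HasDerivWithinAt A₃ (A₃' t) (Set.Ici t₀) t)
    (hA₃lim : Tendsto A₃ atTop (nhds ℓ))
    (hg : ∀ t ∈ Set.Ici t₀, HasDerivWithinAt g (A₃' t / A₃ t * g t - (f t) ^ 2) (Set.Ici t₀) t)
    (hglim : Tendsto g atTop (nhds Ginf)) :
    ∀ t ∈ Set.Ici t₀,
      IntegrableOn (fun s => (f s) ^ 2 / A₃ s) (Set.Ioi t) ∧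
      g t = A₃ t * (Ginf / ℓ + ∫ s in Set.Ioi t, (f s) ^ 2 / A₃ s) := by
  intro t ht
  have hquot : ∀ x ∈ Ici t₀, HasDerivWithinAt (fun s => g s / A₃ s) (-(f x ^ 2 / A₃ x))
      (Ici t₀) x := fun x hx =>
    (hA₃deriv x hx).div_of_eq_logDeriv_mul_sub (hg x hx) (hA₃pos x hx).ne'
  have hnonneg : ∀ x ∈ Ioi t₀, 0 ≤ f x ^ 2 / A₃ x := fun x hx =>
    div_nonneg (sq_nonneg _) (hA₃pos x (mem_Ici_of_Ioi hx)).le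
  obtain ⟨hint, hval⟩ := integrableOn_Ioi_and_integral_eq_of_hasDerivWithinAt_neg hquot hnonneg
    (hglim.div hA₃lim hℓ.ne') ht
  refine ⟨hint, ?_⟩
  rw [hval, add_sub_cancel, mul_div_cancel₀ _ (hA₃pos t ht).ne']

/-- Let `A₃ : [t₀, ∞) → (0, ∞)` be differentiable and nondecreasing with
limit `ℓ ∈ (0, ∞)`, `f` continuous, `g` differentiable and bounded with
`g' = (A₃'/A₃) g − f²`, and `G_∞ = lim g`. Then `∫_t^∞ f²/A₃` is finite for every
`t ≥ t₀`, and `g(t) = A₃(t)·(G_∞/ℓ + ∫_t^∞ f(s)²/A₃(s) ds)`. -/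
theorem integral_representation (t₀ ℓ Ginf : ℝ) (hℓ : 0 < ℓ)
    (A₃ A₃' f g : ℝ → ℝ)
    (hA₃pos : ∀ t ∈ Set.Ici t₀, 0 < A₃ t)
    (hA₃deriv : ∀ t ∈ Set.Ici t₀, HasDerivWithinAt A₃ (A₃' t) (Set.Ici t₀) t)
    (hA₃mono : MonotoneOn A₃ (Set.Ici t₀))
    (hA₃lim : Tendsto A₃ atTop (nhds ℓ))
    (hf : ContinuousOn f (Set.Ici t₀))
    (hg : ∀ t ∈ Set.Ici t₀, HasDerivWithinAt g (A₃' t / A₃ t * g t - (f t) ^ 2) (Set.Ici t₀) t)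
    (hgbdd : ∃ M : ℝ, ∀ t ∈ Set.Ici t₀, |g t| ≤ M)
    (hglim : Tendsto g atTop (nhds Ginf)) :
    ∀ t ∈ Set.Ici t₀,
      IntegrableOn (fun s => (f s) ^ 2 / A₃ s) (Set.Ioi t) ∧
      g t = A₃ t * (Ginf / ℓ + ∫ s in Set.Ioi t, (f s) ^ 2 / A₃ s) :=
  integral_representation_general t₀ ℓ Ginf hℓ A₃ A₃' f g hA₃pos hA₃deriv hA₃lim hg hglim
end

section
/- Let t₀ < T ≤ ∞ and let α, β : [t₀, T) → ℝ be continuous. Let (f, g) and (f̂, ĝ) be two solutions on [t₀, T) of the system f' = −α f − f g, g' = −β g − f², with (f(t₀), g(t₀)) ≠ (f̂(t₀), ĝ(t₀)), and suppose g(t₀) ≥ ĝ(t₀) and f̂(t₀) ≥ f(t₀) > 0. Then for all t ∈ (t₀, T): g(t) > ĝ(t) and f̂(t) > f(t). -/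
/-!
The differences `u = g - ĝ` and `v = f̂ - f` solve the linear system
`u' = -β u + (f̂ + f) v`, `v' = -(α + g) v + f̂ u`, whose off-diagonal coefficients are positive
because `f` and `f̂` stay positive (`f' = -(α + g) f` is linear in `f`). Integrating factors
remove the diagonal terms. If `u(t₀) > 0` and `d` were the first zero of `u`, then `u > 0` on
`[t₀, d)` forces `v` (times its factor) to increase there, so `v ≥ 0`, so `u` (times its factor)
increases on `[t₀, d]` and cannot vanish at `d`. Once one of `u`, `v` is positive, the other
becomes strictly positive at once.
-/

open Set Real

section LinearComparison

variable {a b : ℝ} {c y r : ℝ → ℝ}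

theorem monotoneOn_Icc_of_hasDerivWithinAt_nonneg {F F' : ℝ → ℝ}
    (hF : ∀ x ∈ Icc a b, HasDerivWithinAt F (F' x) (Icc a b) x)
    (hF' : ∀ x ∈ Ioo a b, 0 ≤ F' x) : MonotoneOn F (Icc a b) :=
  monotoneOn_of_hasDerivWithinAt_nonneg (convex_Icc a b)
    (fun x hx => (hF x hx).continuousWithinAt)
    (by simpa only [interior_Icc] using
      fun x hx => (hF x (Ioo_subset_Icc_self hx)).mono Ioo_subset_Icc_self)
    (by simpa only [interior_Icc] using hF')

theorem strictMonoOn_Icc_of_hasDerivWithinAt_pos {F F' : ℝ → ℝ}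
    (hF : ∀ x ∈ Icc a b, HasDerivWithinAt F (F' x) (Icc a b) x)
    (hF' : ∀ x ∈ Ioo a b, 0 < F' x) : StrictMonoOn F (Icc a b) :=
  strictMonoOn_of_hasDerivWithinAt_pos (convex_Icc a b)
    (fun x hx => (hF x hx).continuousWithinAt)
    (by simpa only [interior_Icc] using
      fun x hx => (hF x (Ioo_subset_Icc_self hx)).mono Ioo_subset_Icc_self)
    (by simpa only [interior_Icc] using hF')

theorem exists_integratingFactor (hab : a ≤ b) (hc : ContinuousOn c (Icc a b)) :
    ∃ w : ℝ → ℝ, (∀ x, 0 < w x) ∧ ∀ (y : ℝ → ℝ) (r : ℝ), ∀ x ∈ Icc a b,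
      HasDerivWithinAt y (c x * y x + r) (Icc a b) x →
      HasDerivWithinAt (fun t => y t * w t) (r * w x) (Icc a b) x := by
  set e := IccExtend hab ((Icc a b).domRestrict c)
  have he : Continuous e := hc.domRestrict.Icc_extend'
  refine ⟨fun t => exp (-∫ s in a..t, e s), fun t => exp_pos _, fun y r x hx hy => ?_⟩
  have hA : HasDerivWithinAt (fun t => ∫ s in a..t, e s) (c x) (Icc a b) x := by
    have := (he.integral_hasStrictDerivAt a x).hasDerivAt.hasDerivWithinAt (s := Icc a b)
    rwa [show e x = c x from IccExtend_of_mem _ _ hx] at this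
  refine (hy.mul hA.neg.exp).congr_deriv ?_
  simp only [Pi.neg_apply]
  ring

theorem pos_of_hasDerivWithinAt_linear (hab : a ≤ b) (hc : ContinuousOn c (Icc a b))
    (hy : ∀ x ∈ Icc a b, HasDerivWithinAt y (c x * y x + r x) (Icc a b) x)
    (hr : ∀ x ∈ Ioo a b, 0 ≤ r x) (hya : 0 < y a) : ∀ x ∈ Icc a b, 0 < y x := by
  obtain ⟨w, hw, hyw⟩ := exists_integratingFactor hab hc
  have hmono : MonotoneOn (fun t => y t * w t) (Icc a b) :=
    monotoneOn_Icc_of_hasDerivWithinAt_nonneg (fun x hx => hyw y (r x) x hx (hy x hx))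
      fun x hx => mul_nonneg (hr x hx) (hw x).le
  intro x hx
  have : y a * w a ≤ y x * w x := hmono ⟨le_rfl, hab⟩ hx hx.1
  exact (mul_pos_iff_of_pos_right (hw x)).1 ((mul_pos hya (hw a)).trans_le this)

theorem pos_of_hasDerivWithinAt_linear_of_forcing_pos (hab : a ≤ b)
    (hc : ContinuousOn c (Icc a b))
    (hy : ∀ x ∈ Icc a b, HasDerivWithinAt y (c x * y x + r x) (Icc a b) x)
    (hr : ∀ x ∈ Ioo a b, 0 < r x) (hya : 0 ≤ y a) : ∀ x ∈ Ioc a b, 0 < y x := by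
  obtain ⟨w, hw, hyw⟩ := exists_integratingFactor hab hc
  have hmono : StrictMonoOn (fun t => y t * w t) (Icc a b) :=
    strictMonoOn_Icc_of_hasDerivWithinAt_pos (fun x hx => hyw y (r x) x hx (hy x hx))
      fun x hx => mul_pos (hr x hx) (hw x)
  intro x hx
  have : y a * w a < y x * w x := hmono ⟨le_rfl, hab⟩ (Ioc_subset_Icc_self hx) hx.1
  exact (mul_pos_iff_of_pos_right (hw x)).1 ((mul_nonneg hya (hw a).le).trans_lt this)

end LinearComparison

section Cooperative

variable {a b : ℝ} {u v c₁ c₂ p q : ℝ → ℝ}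

theorem pos_of_cooperative_of_pos
    (hc₁ : ContinuousOn c₁ (Icc a b)) (hc₂ : ContinuousOn c₂ (Icc a b))
    (hu : ∀ x ∈ Icc a b, HasDerivWithinAt u (c₁ x * u x + p x * v x) (Icc a b) x)
    (hv : ∀ x ∈ Icc a b, HasDerivWithinAt v (c₂ x * v x + q x * u x) (Icc a b) x)
    (hp : ∀ x ∈ Icc a b, 0 ≤ p x) (hq : ∀ x ∈ Icc a b, 0 < q x)
    (hua : 0 < u a) (hva : 0 ≤ v a) : ∀ x ∈ Icc a b, 0 < u x := by
  by_contra! h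
  obtain ⟨x, hx, hux⟩ := h
  set Z := Icc a b ∩ u ⁻¹' Iic 0
  have hZ : IsClosed Z :=
    ContinuousOn.preimage_isClosed_of_isClosed (fun x hx => (hu x hx).continuousWithinAt)
      isClosed_Icc isClosed_Iic
  have hZa : BddBelow Z := ⟨a, fun z hz => hz.1.1⟩
  set d := sInf Z
  obtain ⟨⟨had, hdb⟩, hud⟩ : d ∈ Z := hZ.csInf_mem ⟨x, hx, hux⟩ hZa
  have hu_before : ∀ z ∈ Ico a d, 0 < u z := fun z hz => by
    by_contra! h
    exact (csInf_le hZa ⟨⟨hz.1, hz.2.le.trans hdb⟩, h⟩).not_gt hz.2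
  have hsub : Icc a d ⊆ Icc a b := Icc_subset_Icc_right hdb
  have hv_pos : ∀ z ∈ Ioc a d, 0 < v z :=
    pos_of_hasDerivWithinAt_linear_of_forcing_pos had (hc₂.mono hsub)
      (fun z hz => (hv z (hsub hz)).mono hsub)
      (fun z hz => mul_pos (hq z (hsub (Ioo_subset_Icc_self hz)))
        (hu_before z (Ioo_subset_Ico_self hz)))
      hva
  have hu_pos : ∀ z ∈ Icc a d, 0 < u z :=
    pos_of_hasDerivWithinAt_linear had (hc₁.mono hsub)
      (fun z hz => (hu z (hsub hz)).mono hsub)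
      (fun z hz => mul_nonneg (hp z (hsub (Ioo_subset_Icc_self hz)))
        (hv_pos z (Ioo_subset_Ioc_self hz)).le)
      hua
  exact (hu_pos d ⟨had, le_rfl⟩).not_ge hud

theorem pos_of_cooperative (hab : a < b)
    (hc₁ : ContinuousOn c₁ (Icc a b)) (hc₂ : ContinuousOn c₂ (Icc a b))
    (hu : ∀ x ∈ Icc a b, HasDerivWithinAt u (c₁ x * u x + p x * v x) (Icc a b) x)
    (hv : ∀ x ∈ Icc a b, HasDerivWithinAt v (c₂ x * v x + q x * u x) (Icc a b) x)
    (hp : ∀ x ∈ Icc a b, 0 < p x) (hq : ∀ x ∈ Icc a b, 0 < q x)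
    (hua : 0 ≤ u a) (hva : 0 ≤ v a) (h₀ : 0 < u a ∨ 0 < v a) : 0 < u b ∧ 0 < v b := by
  have hb : b ∈ Ioc a b := ⟨hab, le_rfl⟩
  rcases h₀ with hua' | hva'
  · have hu_pos := pos_of_cooperative_of_pos hc₁ hc₂ hu hv (fun x hx => (hp x hx).le) hq
      hua' hva
    refine ⟨hu_pos b (Ioc_subset_Icc_self hb), ?_⟩
    exact pos_of_hasDerivWithinAt_linear_of_forcing_pos hab.le hc₂ hv
      (fun x hx => mul_pos (hq x (Ioo_subset_Icc_self hx)) (hu_pos x (Ioo_subset_Icc_self hx)))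
      hva b hb
  · have hv_pos := pos_of_cooperative_of_pos hc₂ hc₁ hv hu (fun x hx => (hq x hx).le) hp
      hva' hua
    refine ⟨?_, hv_pos b (Ioc_subset_Icc_self hb)⟩
    exact pos_of_hasDerivWithinAt_linear_of_forcing_pos hab.le hc₁ hu
      (fun x hx => mul_pos (hp x (Ioo_subset_Icc_self hx)) (hv_pos x (Ioo_subset_Icc_self hx)))
      hua b hb

end Cooperative

theorem comparison_lemma_general (t₀ : ℝ) (T : EReal)
    (α β f g fh gh : ℝ → ℝ)
    (hα : ContinuousOn α {t : ℝ | t₀ ≤ t ∧ (t : EReal) < T})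
    (hβ : ContinuousOn β {t : ℝ | t₀ ≤ t ∧ (t : EReal) < T})
    (hf : ∀ t, t₀ ≤ t → (t : EReal) < T →
      HasDerivWithinAt f (-(α t) * f t - f t * g t) {t : ℝ | t₀ ≤ t ∧ (t : EReal) < T} t)
    (hg : ∀ t, t₀ ≤ t → (t : EReal) < T →
      HasDerivWithinAt g (-(β t) * g t - (f t) ^ 2) {t : ℝ | t₀ ≤ t ∧ (t : EReal) < T} t)
    (hfh : ∀ t, t₀ ≤ t → (t : EReal) < T →
      HasDerivWithinAt fh (-(α t) * fh t - fh t * gh t) {t : ℝ | t₀ ≤ t ∧ (t : EReal) < T} t)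
    (hgh : ∀ t, t₀ ≤ t → (t : EReal) < T →
      HasDerivWithinAt gh (-(β t) * gh t - (fh t) ^ 2) {t : ℝ | t₀ ≤ t ∧ (t : EReal) < T} t)
    (hne : (f t₀, g t₀) ≠ (fh t₀, gh t₀))
    (hg0 : g t₀ ≥ gh t₀) (hf0 : fh t₀ ≥ f t₀) (hfpos : f t₀ > 0) :
    ∀ t, t₀ < t → (t : EReal) < T → g t > gh t ∧ fh t > f t := by
  intro t ht htT
  have hJ : Icc t₀ t ⊆ {s : ℝ | t₀ ≤ s ∧ (s : EReal) < T} :=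
    fun s hs => ⟨hs.1, (EReal.coe_le_coe_iff.2 hs.2).trans_lt htT⟩
  have toIcc : ∀ {F F' : ℝ → ℝ}, (∀ s, t₀ ≤ s → (s : EReal) < T →
      HasDerivWithinAt F (F' s) {s : ℝ | t₀ ≤ s ∧ (s : EReal) < T} s) →
      ∀ s ∈ Icc t₀ t, HasDerivWithinAt F (F' s) (Icc t₀ t) s :=
    fun h s hs => (h s (hJ hs).1 (hJ hs).2).mono hJ
  have hg_cont : ContinuousOn g (Icc t₀ t) := fun s hs => (toIcc hg s hs).continuousWithinAt
  have hgh_cont : ContinuousOn gh (Icc t₀ t) := fun s hs => (toIcc hgh s hs).continuousWithinAt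
  have hf_pos : ∀ s ∈ Icc t₀ t, 0 < f s :=
    pos_of_hasDerivWithinAt_linear ht.le (c := fun s => -(α s + g s)) (r := fun _ => 0)
      ((hα.mono hJ).add hg_cont).neg
      (fun s hs => (toIcc hf s hs).congr_deriv (by ring)) (fun _ _ => le_rfl) hfpos
  have hfh_pos : ∀ s ∈ Icc t₀ t, 0 < fh s :=
    pos_of_hasDerivWithinAt_linear ht.le (c := fun s => -(α s + gh s)) (r := fun _ => 0)
      ((hα.mono hJ).add hgh_cont).neg
      (fun s hs => (toIcc hfh s hs).congr_deriv (by ring)) (fun _ _ => le_rfl)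
      (hfpos.trans_le hf0)
  have h₀ : 0 < g t₀ - gh t₀ ∨ 0 < fh t₀ - f t₀ := by
    contrapose! hne
    rw [Prod.mk.injEq]
    constructor <;> linarith
  have key := pos_of_cooperative ht (u := fun s => g s - gh s) (v := fun s => fh s - f s)
    (c₁ := fun s => -β s) (c₂ := fun s => -(α s + g s)) (p := fun s => fh s + f s) (q := fh)
    (hβ.mono hJ).neg ((hα.mono hJ).add hg_cont).neg
    (fun s hs => ((toIcc hg s hs).sub (toIcc hgh s hs)).congr_deriv (by ring))
    (fun s hs => ((toIcc hfh s hs).sub (toIcc hf s hs)).congr_deriv (by ring))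
    (fun s hs => add_pos (hfh_pos s hs) (hf_pos s hs)) hfh_pos
    (sub_nonneg.2 hg0) (sub_nonneg.2 hf0) h₀
  exact ⟨sub_pos.1 key.1, sub_pos.1 key.2⟩

/-- Comparison of two solutions of `f' = −α f − f g`, `g' = −β g − f²`
on `[t₀, T)` with `g(t₀) ≥ ĝ(t₀)`, `f̂(t₀) ≥ f(t₀) > 0` and distinct initial data:
then `g > ĝ` and `f̂ > f` on `(t₀, T)`. -/
theorem comparison_lemma (t₀ : ℝ) (T : EReal) (hT : (t₀ : EReal) < T)
    (α β f g fh gh : ℝ → ℝ)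
    (hα : ContinuousOn α {t : ℝ | t₀ ≤ t ∧ (t : EReal) < T})
    (hβ : ContinuousOn β {t : ℝ | t₀ ≤ t ∧ (t : EReal) < T})
    (hf : ∀ t, t₀ ≤ t → (t : EReal) < T →
      HasDerivWithinAt f (-(α t) * f t - f t * g t) {t : ℝ | t₀ ≤ t ∧ (t : EReal) < T} t)
    (hg : ∀ t, t₀ ≤ t → (t : EReal) < T →
      HasDerivWithinAt g (-(β t) * g t - (f t) ^ 2) {t : ℝ | t₀ ≤ t ∧ (t : EReal) < T} t)
    (hfh : ∀ t, t₀ ≤ t → (t : EReal) < T →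
      HasDerivWithinAt fh (-(α t) * fh t - fh t * gh t) {t : ℝ | t₀ ≤ t ∧ (t : EReal) < T} t)
    (hgh : ∀ t, t₀ ≤ t → (t : EReal) < T →
      HasDerivWithinAt gh (-(β t) * gh t - (fh t) ^ 2) {t : ℝ | t₀ ≤ t ∧ (t : EReal) < T} t)
    (hne : (f t₀, g t₀) ≠ (fh t₀, gh t₀))
    (hg0 : g t₀ ≥ gh t₀) (hf0 : fh t₀ ≥ f t₀) (hfpos : f t₀ > 0) :
    ∀ t, t₀ < t → (t : EReal) < T → g t > gh t ∧ fh t > f t :=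
  comparison_lemma_general t₀ T α β f g fh gh hα hβ hf hg hfh hgh hne hg0 hf0 hfpos
end

section
/- Let A₃ : [t₀, ∞) → (0, ∞) be differentiable and nondecreasing with limit ℓ ∈ (0, ∞), and let α : [t₀, ∞) → ℝ be continuous and bounded. Consider the system f' = −α f − f g, g' = (A₃'/A₃) g − f². Suppose (f̂, ĝ) is a bounded solution on [t₀, ∞) with ĝ(t) → Ĝ_∞ as t → ∞, and (f, g) is a solution with (f(t₀), g(t₀)) ≠ (f̂(t₀), ĝ(t₀)), g(t₀) ≥ ĝ(t₀), and f̂(t₀) ≥ f(t₀) > 0. Then (f, g) extends to a bounded solution on all of [t₀, ∞), g(t) converges to a limit G_∞ as t → ∞, and G_∞ > Ĝ_∞. -/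
/-!
In the variables `(f, u) = (f, g / A₃)` the equations become `f' = -α f - A₃ f u`,
`u' = -f² / A₃`, a vector field that is locally Lipschitz in `(f, u)` with coefficients bounded
in `t`; this gives local existence and uniqueness. Along a solution `f` stays nonnegative, `u` is
nonincreasing, and `(f̂ - f, (g - ĝ) / A₃)` solves a cooperative linear system, so `f ≤ f̂` and
`ĝ ≤ g` persist. These bounds trap the solution in a bounded region, so it extends to `[t₀, ∞)`.
Finally `ψ = g - ĝ` satisfies `ψ' = (A₃'/A₃) ψ + f̂² - f² ≥ 0`, so `ψ` increases to a limit, which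
is positive since either `ψ(t₀) > 0` or `ψ(t₀) = 0 < f̂(t₀)² - f(t₀)² = ψ'(t₀)`.
-/

open Filter Set Metric Topology
open scoped NNReal

theorem pair_pos_of_deriv_nonneg_of_pos {a b : ℝ} {y z y' z' : ℝ → ℝ}
    (hy : ∀ t ∈ Icc a b, HasDerivWithinAt y (y' t) (Icc a b) t)
    (hz : ∀ t ∈ Icc a b, HasDerivWithinAt z (z' t) (Icc a b) t)
    (hinward : ∀ t ∈ Icc a b, 0 < y t → 0 < z t → 0 ≤ y' t ∧ 0 ≤ z' t)
    (hya : 0 < y a) (hza : 0 < z a) : ∀ t ∈ Icc a b, 0 < y t ∧ 0 < z t := by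
  by_contra! hbad
  obtain ⟨t₁, ht₁, hbad₁⟩ := hbad
  set B := Icc a b ∩ y ⁻¹' Iic 0 ∪ Icc a b ∩ z ⁻¹' Iic 0
  have hyc : ContinuousOn y (Icc a b) := fun t ht => (hy t ht).continuousWithinAt
  have hzc : ContinuousOn z (Icc a b) := fun t ht => (hz t ht).continuousWithinAt
  have hB : IsCompact B := isCompact_Icc.of_isClosed_subset
    ((hyc.preimage_isClosed_of_isClosed isClosed_Icc isClosed_Iic).union
      (hzc.preimage_isClosed_of_isClosed isClosed_Icc isClosed_Iic))
    (union_subset inter_subset_left inter_subset_left)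
  obtain ⟨s, hsB, hs⟩ := hB.exists_isLeast <| by
    by_cases h : 0 < y t₁
    · exact ⟨t₁, .inr ⟨ht₁, hbad₁ h⟩⟩
    · exact ⟨t₁, .inl ⟨ht₁, not_lt.1 h⟩⟩
  have hsab : s ∈ Icc a b := by rcases hsB with h | h <;> exact h.1
  have hsub : Icc a s ⊆ Icc a b := Icc_subset_Icc_right hsab.2
  have hpos : ∀ t ∈ Ioo a s, 0 < y t ∧ 0 < z t := fun t ht => by
    have htB : t ∉ B := fun h => (hs h).not_gt ht.2
    simp only [B, mem_union, mem_inter_iff, mem_preimage, mem_Iic, not_or, not_and, not_le] at htB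
    exact ⟨htB.1 (hsub (Ioo_subset_Icc_self ht)), htB.2 (hsub (Ioo_subset_Icc_self ht))⟩
  have hmono (w w' : ℝ → ℝ) (hw : ∀ t ∈ Icc a b, HasDerivWithinAt w (w' t) (Icc a b) t)
      (hw' : ∀ t ∈ Ioo a s, 0 ≤ w' t) : w a ≤ w s := by
    refine monotoneOn_of_hasDerivWithinAt_nonneg (f' := w') (convex_Icc a s)
      (fun t ht => (hw t (hsub ht)).continuousWithinAt.mono hsub) (fun t ht => ?_)
      (fun t ht => hw' t (by rwa [interior_Icc] at ht))
      (left_mem_Icc.2 hsab.1) (right_mem_Icc.2 hsab.1) hsab.1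
    rw [interior_Icc] at ht ⊢
    exact (hw t (hsub (Ioo_subset_Icc_self ht))).mono (Ioo_subset_Icc_self.trans hsub)
  have hinward' := fun t (ht : t ∈ Ioo a s) =>
    hinward t (hsub (Ioo_subset_Icc_self ht)) (hpos t ht).1 (hpos t ht).2
  have hys := hya.trans_le (hmono y y' hy fun t ht => (hinward' t ht).1)
  have hzs := hza.trans_le (hmono z z' hz fun t ht => (hinward' t ht).2)
  rcases hsB with h | h
  · exact h.2.not_gt hys
  · exact h.2.not_gt hzs

theorem pair_nonneg_of_cooperative {a b : ℝ} {y z p q r s : ℝ → ℝ}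
    (hp : ContinuousOn p (Icc a b)) (hq : ContinuousOn q (Icc a b))
    (hr : ContinuousOn r (Icc a b)) (hs : ContinuousOn s (Icc a b))
    (hq₀ : ∀ t ∈ Icc a b, 0 ≤ q t) (hr₀ : ∀ t ∈ Icc a b, 0 ≤ r t)
    (hy : ∀ t ∈ Icc a b, HasDerivWithinAt y (p t * y t + q t * z t) (Icc a b) t)
    (hz : ∀ t ∈ Icc a b, HasDerivWithinAt z (r t * y t + s t * z t) (Icc a b) t)
    (hya : 0 ≤ y a) (hza : 0 ≤ z a) : ∀ t ∈ Icc a b, 0 ≤ y t ∧ 0 ≤ z t := by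
  obtain ⟨K, hK⟩ := isCompact_Icc.exists_bound_of_continuousOn
    (hp.prodMk (hq.prodMk (hr.prodMk hs)))
  simp only [norm_prod_le_iff, Real.norm_eq_abs, abs_le] at hK
  -- The weight `e^{Kt}` makes the diagonal coefficients nonnegative, and the perturbation
  -- `ε e^{3Kt}` makes the pair strictly positive at `a` and keeps it pointing inward.
  have hpert : ∀ ε > 0, ∀ t ∈ Icc a b, 0 < Real.exp (K * t) * y t + ε * Real.exp (3 * K * t) ∧
      0 < Real.exp (K * t) * z t + ε * Real.exp (3 * K * t) := by
    intro ε hε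
    have he (c t : ℝ) : HasDerivAt (fun t => Real.exp (c * t)) (c * Real.exp (c * t)) t := by
      simpa [mul_comm] using ((hasDerivAt_id t).const_mul c).exp
    refine pair_pos_of_deriv_nonneg_of_pos
      (y' := fun t => (K + p t) * (Real.exp (K * t) * y t + ε * Real.exp (3 * K * t))
        + q t * (Real.exp (K * t) * z t + ε * Real.exp (3 * K * t))
        + ε * Real.exp (3 * K * t) * (2 * K - p t - q t))
      (z' := fun t => r t * (Real.exp (K * t) * y t + ε * Real.exp (3 * K * t))
        + (K + s t) * (Real.exp (K * t) * z t + ε * Real.exp (3 * K * t))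
        + ε * Real.exp (3 * K * t) * (2 * K - r t - s t))
      (fun t ht => ?_) (fun t ht => ?_) (fun t ht hY hZ => ?_) (by positivity) (by positivity)
    · exact (((he K t).hasDerivWithinAt.mul (hy t ht)).add
        (((he (3 * K) t).hasDerivWithinAt).const_mul ε)).congr_deriv (by ring)
    · exact (((he K t).hasDerivWithinAt.mul (hz t ht)).add
        (((he (3 * K) t).hasDerivWithinAt).const_mul ε)).congr_deriv (by ring)
    · obtain ⟨⟨hp₁, hp₂⟩, ⟨hq₁, hq₂⟩, ⟨hr₁, hr₂⟩, ⟨hs₁, hs₂⟩⟩ := hK t ht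
      have hE : 0 ≤ ε * Real.exp (3 * K * t) := by positivity
      exact ⟨add_nonneg (add_nonneg (mul_nonneg (by linarith) hY.le)
          (mul_nonneg (hq₀ t ht) hZ.le)) (mul_nonneg hE (by linarith)),
        add_nonneg (add_nonneg (mul_nonneg (hr₀ t ht) hY.le)
          (mul_nonneg (by linarith) hZ.le)) (mul_nonneg hE (by linarith))⟩
  intro t ht
  have hlimit (c : ℝ) (hc : ∀ ε > 0, 0 < Real.exp (K * t) * c + ε * Real.exp (3 * K * t)) :
      0 ≤ c := by
    by_contra! hc₀
    have := hc (-(Real.exp (K * t) * c) / Real.exp (3 * K * t))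
      (div_pos (neg_pos.2 (mul_neg_of_pos_of_neg (Real.exp_pos _) hc₀)) (Real.exp_pos _))
    rw [div_mul_cancel₀ _ (Real.exp_pos _).ne'] at this
    linarith
  exact ⟨hlimit _ fun ε hε => (hpert ε hε t ht).1, hlimit _ fun ε hε => (hpert ε hε t ht).2⟩

theorem nonneg_of_hasDerivWithinAt_linear {a b : ℝ} {y c : ℝ → ℝ} (hc : ContinuousOn c (Icc a b))
    (hy : ∀ t ∈ Icc a b, HasDerivWithinAt y (c t * y t) (Icc a b) t) (hya : 0 ≤ y a) :
    ∀ t ∈ Icc a b, 0 ≤ y t := fun t ht =>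
  (pair_nonneg_of_cooperative hc continuousOn_const continuousOn_const hc (fun _ _ => le_rfl)
    (fun _ _ => le_rfl) (fun t ht => by simpa using hy t ht) (fun t ht => by simpa using hy t ht)
    hya hya t ht).1

theorem MonotoneOn.le_of_tendsto_Ici {f : ℝ → ℝ} {a l : ℝ} (hf : MonotoneOn f (Ici a))
    (hl : Tendsto f atTop (𝓝 l)) : ∀ t ∈ Ici a, f t ≤ l := fun t ht =>
  ge_of_tendsto hl ((eventually_ge_atTop t).mono fun _ hs => hf ht (ht.trans hs) hs)

theorem MonotoneOn.exists_tendsto_atTop_Ici {f : ℝ → ℝ} {a : ℝ} (hf : MonotoneOn f (Ici a))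
    (hb : ∃ M, ∀ t ∈ Ici a, f t ≤ M) : ∃ l, Tendsto f atTop (𝓝 l) := by
  obtain ⟨M, hM⟩ := hb
  have hmono : Monotone fun t => f (max t a) := fun s t hst =>
    hf (le_max_right s a) (le_max_right t a) (max_le_max hst le_rfl)
  refine ⟨_, (tendsto_atTop_ciSup hmono ⟨M, ?_⟩).congr' ?_⟩
  · rintro _ ⟨t, rfl⟩
    exact hM _ (le_max_right t a)
  · filter_upwards [eventually_ge_atTop a] with t ht
    rw [max_eq_left ht]

theorem exists_gt_of_hasDerivWithinAt_Ici_pos {f : ℝ → ℝ} {a f' : ℝ}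
    (hf : HasDerivWithinAt f f' (Ici a) a) (hf' : 0 < f') : ∃ b > a, f a < f b := by
  have hslope : Tendsto (slope f a) (𝓝[>] a) (𝓝 f') :=
    (hasDerivWithinAt_iff_tendsto_slope' (lt_irrefl a)).1 (hasDerivWithinAt_Ioi_iff_Ici.2 hf)
  obtain ⟨b, hb, hab⟩ := ((hslope.eventually (lt_mem_nhds hf')).and self_mem_nhdsWithin).exists
  refine ⟨b, hab, ?_⟩
  rw [slope_def_field] at hb
  exact sub_pos.1 ((div_pos_iff_of_pos_right (sub_pos.2 hab)).1 hb)

theorem hasDerivWithinAt_prod_iff {E F : Type*} [NormedAddCommGroup E] [NormedSpace ℝ E]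
    [NormedAddCommGroup F] [NormedSpace ℝ F] {p : ℝ → E × F} {a : E} {b : F} {s : Set ℝ}
    {t : ℝ} : HasDerivWithinAt p (a, b) s t ↔
      HasDerivWithinAt (fun t => (p t).1) a s t ∧ HasDerivWithinAt (fun t => (p t).2) b s t :=
  ⟨fun h => ⟨(hasFDerivAt_fst (p := p t)).comp_hasDerivWithinAt t h,
    (hasFDerivAt_snd (p := p t)).comp_hasDerivWithinAt t h⟩, fun h => h.1.prodMk h.2⟩

theorem ContDiff.exists_lipschitzOnWith_and_norm_le_of_isBounded {P E F : Type*}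
    [NormedAddCommGroup P] [NormedSpace ℝ P] [ProperSpace P]
    [NormedAddCommGroup E] [NormedSpace ℝ E] [ProperSpace E]
    [NormedAddCommGroup F] [NormedSpace ℝ F]
    {B : P × E → F} (hB : ContDiff ℝ 1 B) {c : ℝ → P} {s : Set ℝ}
    (hc : Bornology.IsBounded (c '' s)) (R : ℝ) :
    (∃ K, ∀ t ∈ s, LipschitzOnWith K (fun x => B (c t, x)) (closedBall 0 R)) ∧
      ∃ C, ∀ t ∈ s, ∀ x ∈ closedBall (0 : E) R, ‖B (c t, x)‖ ≤ C := by
  obtain ⟨ρ, hρ⟩ := hc.subset_closedBall 0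
  set S := closedBall (0 : P) ρ ×ˢ closedBall (0 : E) R
  have hS : IsCompact S := (isCompact_closedBall _ _).prod (isCompact_closedBall _ _)
  have hmem (t : ℝ) (ht : t ∈ s) : MapsTo (fun x => (c t, x)) (closedBall 0 R) S :=
    fun _ hx => ⟨hρ (mem_image_of_mem c ht), hx⟩
  obtain ⟨K, hK⟩ := hB.contDiffOn.exists_lipschitzOnWith one_ne_zero
    ((convex_closedBall _ _).prod (convex_closedBall _ _)) hS
  obtain ⟨C, hC⟩ := hS.exists_bound_of_continuousOn hB.continuous.continuousOn
  refine ⟨⟨K, fun t ht => ?_⟩, C, fun t ht x hx => hC _ (hmem t ht hx)⟩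
  have hKt := hK.comp (LipschitzWith.prodMk_left (c t)).lipschitzOnWith (hmem t ht)
  rwa [mul_one] at hKt

section ODE

variable {E : Type*} [NormedAddCommGroup E] [NormedSpace ℝ E] {v : ℝ → E → E} {t₀ : ℝ}

theorem IsIntegralCurveOn.eqOn_Icc {p q : ℝ → E} {b : ℝ}
    (hv : ∀ R, ∃ K, ∀ t ∈ Ici t₀, LipschitzOnWith K (v t) (closedBall 0 R))
    (hp : IsIntegralCurveOn p v (Icc t₀ b)) (hq : IsIntegralCurveOn q v (Icc t₀ b))
    (h₀ : p t₀ = q t₀) : EqOn p q (Icc t₀ b) := by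
  obtain ⟨Rp, hRp⟩ := isCompact_Icc.exists_bound_of_continuousOn hp.continuousOn
  obtain ⟨Rq, hRq⟩ := isCompact_Icc.exists_bound_of_continuousOn hq.continuousOn
  obtain ⟨K, hK⟩ := hv (max Rp Rq)
  have hIci (γ : ℝ → E) (hγ : IsIntegralCurveOn γ v (Icc t₀ b)) (t : ℝ) (ht : t ∈ Ico t₀ b) :
      HasDerivWithinAt γ (v t (γ t)) (Ici t) t :=
    (hγ t (Ico_subset_Icc_self ht)).mono_of_mem_nhdsWithin
      (mem_of_superset (Icc_mem_nhdsGE ht.2) (Icc_subset_Icc_left ht.1))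
  exact ODE_solution_unique_of_mem_Icc_right (s := fun _ => closedBall 0 (max Rp Rq))
    (fun t ht => hK t ht.1) hp.continuousOn (hIci p hp)
    (fun t ht => mem_closedBall_zero_iff.2 ((hRp t (Ico_subset_Icc_self ht)).trans
      (le_max_left _ _)))
    hq.continuousOn (hIci q hq)
    (fun t ht => mem_closedBall_zero_iff.2 ((hRq t (Ico_subset_Icc_self ht)).trans
      (le_max_right _ _)))
    h₀

theorem IsIntegralCurveOn.ite_le {p q : ℝ → E} {a b c : ℝ} (hp : IsIntegralCurveOn p v (Icc a c))
    (hq : IsIntegralCurveOn q v (Icc c b)) (hc : p c = q c) :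
    IsIntegralCurveOn (fun t => if t ≤ c then p t else q t) v (Icc a b) := by
  set r := fun t => if t ≤ c then p t else q t
  have hrp : EqOn r p (Icc a c) := fun t ht => if_pos ht.2
  have hrq : EqOn r q (Icc c b) := fun t ht => by
    rcases ht.1.eq_or_lt with h | h
    · simp [r, ← h, hc]
    · simp [r, not_le.2 h]
  intro t ht
  have hleft : HasDerivWithinAt r (v t (r t)) (Icc a c) t := by
    by_cases htc : t ≤ c
    · rw [hrp ⟨ht.1, htc⟩]
      exact (hp t ⟨ht.1, htc⟩).congr hrp (hrp ⟨ht.1, htc⟩)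
    · exact HasFDerivWithinAt.of_notMem_closure (by rw [closure_Icc]; exact fun h => htc h.2)
  have hright : HasDerivWithinAt r (v t (r t)) (Icc c b) t := by
    by_cases htc : c ≤ t
    · rw [hrq ⟨htc, ht.2⟩]
      exact (hq t ⟨htc, ht.2⟩).congr hrq (hrq ⟨htc, ht.2⟩)
    · exact HasFDerivWithinAt.of_notMem_closure (by rw [closure_Icc]; exact fun h => htc h.1)
  exact (hleft.union hright).mono Icc_subset_Icc_union_Icc

variable [CompleteSpace E]

theorem exists_isIntegralCurveOn_Icc_add_inv {c R C : ℝ} {K : ℝ≥0} (hc : t₀ ≤ c)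
    (hK : ∀ t ∈ Ici t₀, LipschitzOnWith K (v t) (closedBall 0 (R + 1)))
    (hC : ∀ t ∈ Ici t₀, ∀ x ∈ closedBall (0 : E) (R + 1), ‖v t x‖ ≤ C)
    (hcont : ∀ x, ContinuousOn (v · x) (Ici t₀)) {y : E} (hy : ‖y‖ ≤ R) :
    ∃ q : ℝ → E, q c = y ∧ IsIntegralCurveOn q v (Icc c (c + (|C| + 1)⁻¹)) := by
  have hball : closedBall y 1 ⊆ closedBall 0 (R + 1) :=
    closedBall_subset_closedBall' (by rw [dist_zero_right]; linarith)
  have hsub : Icc c (c + (|C| + 1)⁻¹) ⊆ Ici t₀ := fun t ht => hc.trans ht.1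
  set L : ℝ≥0 := ⟨|C| + 1, by positivity⟩
  have hL : (L : ℝ) = |C| + 1 := rfl
  have hpl : IsPicardLindelof v (tmin := c) (tmax := c + (|C| + 1)⁻¹)
      ⟨c, left_mem_Icc.2 (by simp; positivity)⟩ y 1 0 L K :=
    { lipschitzOnWith := fun t ht => (hK t (hsub ht)).mono hball
      continuousOn := fun x _ => (hcont x).mono hsub
      norm_le := fun t ht x hx =>
        (hC t (hsub ht) x (hball hx)).trans (by rw [hL]; linarith [le_abs_self C])
      mul_max_le := by
        rw [add_sub_cancel_left, sub_self, max_eq_left (by positivity), hL,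
          mul_inv_cancel₀ (by positivity)]
        simp }
  exact hpl.exists_eq_forall_mem_Icc_hasDerivWithinAt₀

theorem exists_isIntegralCurveOn_Icc_of_norm_le {x₀ : E} {M : ℝ}
    (hlip : ∀ R, ∃ K, ∀ t ∈ Ici t₀, LipschitzOnWith K (v t) (closedBall 0 R))
    (hbdd : ∀ R, ∃ C, ∀ t ∈ Ici t₀, ∀ x ∈ closedBall (0 : E) R, ‖v t x‖ ≤ C)
    (hcont : ∀ x, ContinuousOn (v · x) (Ici t₀))
    (hM : ∀ b (p : ℝ → E), p t₀ = x₀ → IsIntegralCurveOn p v (Icc t₀ b) →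
      ∀ t ∈ Icc t₀ b, ‖p t‖ ≤ M) (b : ℝ) :
    ∃ p : ℝ → E, p t₀ = x₀ ∧ IsIntegralCurveOn p v (Icc t₀ b) := by
  obtain ⟨K, hK⟩ := hlip (M + 1)
  obtain ⟨C, hC⟩ := hbdd (M + 1)
  -- The a priori bound allows Picard-Lindelöf steps of a uniform length `δ`.
  set δ := (|C| + 1)⁻¹
  have hδ : 0 < δ := by positivity
  have hsteps : ∀ n : ℕ, ∃ p : ℝ → E, p t₀ = x₀ ∧ IsIntegralCurveOn p v (Icc t₀ (t₀ + n * δ)) := by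
    intro n
    induction n with
    | zero =>
      refine ⟨fun _ => x₀, rfl, fun t ht => ?_⟩
      simp only [Nat.cast_zero, zero_mul, add_zero, Icc_self, mem_singleton_iff] at ht ⊢
      subst ht
      exact HasFDerivWithinAt.of_not_accPt (by rw [accPt_principal_iff_nhdsWithin]; simp)
    | succ n ih =>
      obtain ⟨p, hp₀, hp⟩ := ih
      have hn : t₀ ≤ t₀ + n * δ := le_add_of_nonneg_right (by positivity)
      obtain ⟨q, hq₀, hq⟩ := exists_isIntegralCurveOn_Icc_add_inv hn hK hC hcont
        (hM _ p hp₀ hp _ (right_mem_Icc.2 hn))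
      refine ⟨fun t => if t ≤ t₀ + n * δ then p t else q t, by simp [hn, hp₀], ?_⟩
      rw [Nat.cast_succ, add_one_mul, ← add_assoc]
      exact hp.ite_le hq hq₀.symm
  obtain ⟨n, hn⟩ := exists_nat_ge ((b - t₀) / δ)
  obtain ⟨p, hp₀, hp⟩ := hsteps n
  refine ⟨p, hp₀, hp.mono (Icc_subset_Icc_right ?_)⟩
  rw [div_le_iff₀ hδ] at hn
  linarith

theorem exists_isIntegralCurveOn_Ici_of_norm_le {x₀ : E} {M : ℝ}
    (hlip : ∀ R, ∃ K, ∀ t ∈ Ici t₀, LipschitzOnWith K (v t) (closedBall 0 R))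
    (hbdd : ∀ R, ∃ C, ∀ t ∈ Ici t₀, ∀ x ∈ closedBall (0 : E) R, ‖v t x‖ ≤ C)
    (hcont : ∀ x, ContinuousOn (v · x) (Ici t₀))
    (hM : ∀ b (p : ℝ → E), p t₀ = x₀ → IsIntegralCurveOn p v (Icc t₀ b) →
      ∀ t ∈ Icc t₀ b, ‖p t‖ ≤ M) :
    ∃ p : ℝ → E, p t₀ = x₀ ∧ IsIntegralCurveOn p v (Ici t₀) := by
  choose p hp₀ hp using exists_isIntegralCurveOn_Icc_of_norm_le hlip hbdd hcont hM
  have hcoh (b b' t : ℝ) (ht : t ∈ Icc t₀ b) (htb' : t ≤ b') : p b' t = p b t :=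
    ((hp b').mono (Icc_subset_Icc_right (min_le_right b b'))).eqOn_Icc hlip
      ((hp b).mono (Icc_subset_Icc_right (min_le_left b b'))) ((hp₀ b').trans (hp₀ b).symm)
      ⟨ht.1, le_min ht.2 htb'⟩
  refine ⟨fun t => p (t + 1) t, hp₀ _, fun t ht => ?_⟩
  have hnhds : Icc t₀ (t + 1) ∈ 𝓝[Ici t₀] t := by
    rw [← Ici_inter_Iic]
    exact inter_mem_nhdsWithin _ (Iic_mem_nhds (lt_add_one t))
  exact ((hp (t + 1) t ⟨ht, by linarith⟩).mono_of_mem_nhdsWithin hnhds).congr_of_eventuallyEq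
    (eventually_of_mem hnhds fun s hs => hcoh _ _ s hs (by linarith [hs.2])) rfl

end ODE

theorem isBounded_image_triple_inv {s : Set ℝ} {α A : ℝ → ℝ} {Mα a ℓ : ℝ}
    (hα : ∀ t ∈ s, |α t| ≤ Mα) (ha : 0 < a) (hA : ∀ t ∈ s, a ≤ A t ∧ A t ≤ ℓ) :
    Bornology.IsBounded ((fun t => (α t, A t, (A t)⁻¹)) '' s) := by
  refine isBounded_iff_forall_norm_le.2 ⟨Mα + ℓ + a⁻¹, ?_⟩
  rintro _ ⟨t, ht, rfl⟩
  obtain ⟨haA, hAℓ⟩ := hA t ht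
  have hAt : 0 < A t := ha.trans_le haA
  have := (abs_nonneg _).trans (hα t ht)
  have := inv_anti₀ ha haA
  have := inv_pos.2 hAt
  simp only [norm_prod_le_iff, Real.norm_eq_abs, abs_of_pos hAt, abs_of_pos (inv_pos.2 hAt)]
  refine ⟨?_, ?_, ?_⟩ <;> linarith [hα t ht]

theorem abs_le_of_comparison {F G fh gh A c ℓ M : ℝ} (hA : 0 < A) (hAℓ : A ≤ ℓ)
    (hfh : |fh| ≤ M) (hgh : |gh| ≤ M) (hF : 0 ≤ F) (hFfh : F ≤ fh) (hG : gh ≤ G)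
    (hGA : G / A ≤ c) : |F| ≤ M + |c| * ℓ ∧ |G| ≤ M + |c| * ℓ := by
  have hGc : G ≤ |c| * ℓ := calc
    G ≤ c * A := (div_le_iff₀ hA).1 hGA
    _ ≤ |c| * ℓ := mul_le_mul (le_abs_self _) hAℓ hA.le (abs_nonneg _)
  have := mul_nonneg (abs_nonneg c) (hA.le.trans hAℓ)
  have := le_abs_self fh
  have := neg_abs_le gh
  exact ⟨abs_le.2 ⟨by linarith, by linarith⟩, abs_le.2 ⟨by linarith, by linarith⟩⟩

section Instanton

variable {α A A' f g fh gh : ℝ → ℝ}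

def IsInstantonSolutionOn (α A A' f g : ℝ → ℝ) (s : Set ℝ) : Prop :=
  ∀ t ∈ s, HasDerivWithinAt f (-(α t) * f t - f t * g t) s t ∧
    HasDerivWithinAt g (A' t / A t * g t - f t ^ 2) s t

theorem IsInstantonSolutionOn.mono {s s' : Set ℝ}
    (h : IsInstantonSolutionOn α A A' f g s) (hs : s' ⊆ s) :
    IsInstantonSolutionOn α A A' f g s' := fun t ht =>
  ⟨(h t (hs ht)).1.mono hs, (h t (hs ht)).2.mono hs⟩

/-- The instanton equations in the variables `(f, g / A)`. Unlike the original system, this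
vector field does not involve `A'`, which need not be continuous. -/
noncomputable def instantonField (α A : ℝ → ℝ) (t : ℝ) (p : ℝ × ℝ) : ℝ × ℝ :=
  (-(α t) * p.1 - A t * p.1 * p.2, -p.1 ^ 2 / A t)

theorem IsIntegralCurveOn.isInstantonSolutionOn {P : ℝ → ℝ × ℝ} {s : Set ℝ}
    (hP : IsIntegralCurveOn P (instantonField α A) s)
    (hA : ∀ t ∈ s, HasDerivWithinAt A (A' t) s t) (hA₀ : ∀ t ∈ s, A t ≠ 0) :
    IsInstantonSolutionOn α A A' (fun t => (P t).1) (fun t => (P t).2 * A t) s := by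
  intro t ht
  obtain ⟨h₁, h₂⟩ := hasDerivWithinAt_prod_iff.1 (hP t ht)
  refine ⟨h₁.congr_deriv (by ring), (h₂.mul (hA t ht)).congr_deriv ?_⟩
  field_simp [hA₀ t ht]
  ring

theorem IsInstantonSolutionOn.isIntegralCurveOn_div {s : Set ℝ}
    (h : IsInstantonSolutionOn α A A' f g s) (hA : ∀ t ∈ s, HasDerivWithinAt A (A' t) s t)
    (hA₀ : ∀ t ∈ s, A t ≠ 0) :
    IsIntegralCurveOn (fun t => (f t, g t / A t)) (instantonField α A) s := fun t ht =>
  hasDerivWithinAt_prod_iff.2 ⟨(h t ht).1.congr_deriv (by field_simp [hA₀ t ht]),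
    ((h t ht).2.div (hA t ht) (hA₀ t ht)).congr_deriv (by field_simp [hA₀ t ht]; ring)⟩

theorem instantonField_lipschitzOnWith_and_norm_le {t₀ : ℝ}
    (hcoef : Bornology.IsBounded ((fun t => (α t, A t, (A t)⁻¹)) '' Ici t₀)) (R : ℝ) :
    (∃ K, ∀ t ∈ Ici t₀, LipschitzOnWith K (instantonField α A t) (closedBall 0 R)) ∧
      ∃ C, ∀ t ∈ Ici t₀, ∀ x ∈ closedBall (0 : ℝ × ℝ) R, ‖instantonField α A t x‖ ≤ C := by
  have hB : ContDiff ℝ 1 fun q : (ℝ × ℝ × ℝ) × (ℝ × ℝ) =>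
      (-q.1.1 * q.2.1 - q.1.2.1 * q.2.1 * q.2.2, -q.2.1 ^ 2 * q.1.2.2) := by
    fun_prop
  -- `instantonField α A t x` is this polynomial evaluated at `((α t, A t, (A t)⁻¹), x)`.
  exact hB.exists_lipschitzOnWith_and_norm_le_of_isBounded hcoef R

theorem continuousOn_instantonField {s : Set ℝ} (hα : ContinuousOn α s) (hA : ContinuousOn A s)
    (hA₀ : ∀ t ∈ s, A t ≠ 0) (x : ℝ × ℝ) : ContinuousOn (instantonField α A · x) s :=
  ((hα.neg.mul continuousOn_const).sub ((hA.mul continuousOn_const).mul continuousOn_const)).prodMk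
    (continuousOn_const.div hA hA₀)

theorem IsInstantonSolutionOn.comparison {t₀ b : ℝ} (hApos : ∀ t ∈ Icc t₀ b, 0 < A t)
    (hA : ∀ t ∈ Icc t₀ b, HasDerivWithinAt A (A' t) (Icc t₀ b) t) (hα : ContinuousOn α (Icc t₀ b))
    (hfg : IsInstantonSolutionOn α A A' f g (Icc t₀ b))
    (hhat : IsInstantonSolutionOn α A A' fh gh (Icc t₀ b))
    (hf₀ : 0 ≤ f t₀) (hf₀' : f t₀ ≤ fh t₀) (hg₀ : gh t₀ ≤ g t₀) :
    ∀ t ∈ Icc t₀ b, 0 ≤ f t ∧ f t ≤ fh t ∧ gh t ≤ g t ∧ g t / A t ≤ g t₀ / A t₀ := by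
  intro t ht
  have h₀ : t₀ ∈ Icc t₀ b := left_mem_Icc.2 (ht.1.trans ht.2)
  have hA₀ : ∀ t ∈ Icc t₀ b, A t ≠ 0 := fun t ht => (hApos t ht).ne'
  have hAc : ContinuousOn A (Icc t₀ b) := fun t ht => (hA t ht).continuousWithinAt
  have hfc : ContinuousOn f (Icc t₀ b) := fun t ht => (hfg t ht).1.continuousWithinAt
  have hgc : ContinuousOn g (Icc t₀ b) := fun t ht => (hfg t ht).2.continuousWithinAt
  have hfhc : ContinuousOn fh (Icc t₀ b) := fun t ht => (hhat t ht).1.continuousWithinAt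
  have hghc : ContinuousOn gh (Icc t₀ b) := fun t ht => (hhat t ht).2.continuousWithinAt
  have hf : ∀ t ∈ Icc t₀ b, 0 ≤ f t :=
    nonneg_of_hasDerivWithinAt_linear (c := fun t => -(α t + g t)) (hα.add hgc).neg
    (fun t ht => (hfg t ht).1.congr_deriv (by ring)) hf₀
  have hfh : ∀ t ∈ Icc t₀ b, 0 ≤ fh t :=
    nonneg_of_hasDerivWithinAt_linear (c := fun t => -(α t + gh t)) (hα.add hghc).neg
    (fun t ht => (hhat t ht).1.congr_deriv (by ring)) (hf₀.trans hf₀')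
  have hcoop := pair_nonneg_of_cooperative (y := fun t => fh t - f t)
    (z := fun t => (g t - gh t) / A t) (p := fun t => -(α t + gh t)) (q := fun t => f t * A t)
    (r := fun t => (fh t + f t) / A t) (s := fun _ => 0) (hα.add hghc).neg (hfc.mul hAc)
    ((hfhc.add hfc).div hAc hA₀) continuousOn_const
    (fun t ht => mul_nonneg (hf t ht) (hApos t ht).le)
    (fun t ht => div_nonneg (add_nonneg (hfh t ht) (hf t ht)) (hApos t ht).le)
    (fun t ht => ((hhat t ht).1.sub (hfg t ht).1).congr_deriv (by field_simp [hA₀ t ht]; ring))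
    (fun t ht => (((hfg t ht).2.sub (hhat t ht).2).div (hA t ht) (hA₀ t ht)).congr_deriv
      (by simp only [Pi.sub_apply]; field_simp [hA₀ t ht]; ring))
    (sub_nonneg.2 hf₀') (div_nonneg (sub_nonneg.2 hg₀) (hApos t₀ h₀).le)
  have hanti : AntitoneOn (fun t => g t / A t) (Icc t₀ b) := by
    refine antitoneOn_of_hasDerivWithinAt_nonpos (f' := fun t => -f t ^ 2 / A t)
      (convex_Icc t₀ b) (hgc.div hAc hA₀) (fun t ht => ?_) (fun t ht => ?_) <;>
      simp only [interior_Icc] at ht ⊢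
    · exact (hasDerivWithinAt_prod_iff.1 (hfg.isIntegralCurveOn_div hA hA₀ t
        (Ioo_subset_Icc_self ht))).2.mono Ioo_subset_Icc_self
    · exact div_nonpos_of_nonpos_of_nonneg (neg_nonpos.2 (sq_nonneg _))
        (hApos t (Ioo_subset_Icc_self ht)).le
  refine ⟨hf t ht, sub_nonneg.1 (hcoop t ht).1, sub_nonneg.1 ?_, hanti h₀ ht ht.1⟩
  simpa using (le_div_iff₀ (hApos t ht)).1 (hcoop t ht).2

theorem exists_isInstantonSolutionOn_Ici {t₀ f₀ g₀ : ℝ}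
    (hcoef : Bornology.IsBounded ((fun t => (α t, A t, (A t)⁻¹)) '' Ici t₀))
    (hApos : ∀ t ∈ Ici t₀, 0 < A t) (hA : ∀ t ∈ Ici t₀, HasDerivWithinAt A (A' t) (Ici t₀) t)
    (hα : ContinuousOn α (Ici t₀)) (hhat : IsInstantonSolutionOn α A A' fh gh (Ici t₀))
    (hhbdd : ∃ M, ∀ t ∈ Ici t₀, |fh t| ≤ M ∧ |gh t| ≤ M)
    (hf₀ : 0 ≤ f₀) (hf₀' : f₀ ≤ fh t₀) (hg₀ : gh t₀ ≤ g₀) :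
    ∃ f g : ℝ → ℝ, f t₀ = f₀ ∧ g t₀ = g₀ ∧ IsInstantonSolutionOn α A A' f g (Ici t₀) := by
  obtain ⟨Mh, hMh⟩ := hhbdd
  obtain ⟨N, hN⟩ := isBounded_iff_forall_norm_le.1 hcoef
  have hA₀ : ∀ t ∈ Ici t₀, A t ≠ 0 := fun t ht => (hApos t ht).ne'
  have hAIcc (b : ℝ) : ∀ t ∈ Icc t₀ b, HasDerivWithinAt A (A' t) (Icc t₀ b) t :=
    fun t ht => (hA t ht.1).mono Icc_subset_Ici_self
  have hbound (b : ℝ) (p : ℝ → ℝ × ℝ) (hp₀ : p t₀ = (f₀, g₀ / A t₀))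
      (hp : IsIntegralCurveOn p (instantonField α A) (Icc t₀ b)) (t : ℝ) (ht : t ∈ Icc t₀ b) :
      ‖p t‖ ≤ Mh + |g₀ / A t₀| + Mh * N := by
    have hAt := hApos t ht.1
    have hA₀t := hApos t₀ self_mem_Ici
    obtain ⟨h₁, h₂, h₃, h₄⟩ :=
      (hp.isInstantonSolutionOn (hAIcc b) fun s hs => hA₀ s hs.1).comparison
        (fun s hs => hApos s hs.1) (hAIcc b) (hα.mono Icc_subset_Ici_self)
        (hhat.mono Icc_subset_Ici_self) (by simpa [hp₀]) (by simpa [hp₀])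
        (by simpa [hp₀, hA₀t.ne']) t ht
    simp only [hp₀, mul_div_cancel_right₀ _ hAt.ne', mul_div_cancel_right₀ _ hA₀t.ne'] at h₂ h₃ h₄
    have hinv : (A t)⁻¹ ≤ N := (le_abs_self _).trans
      (((norm_snd_le _).trans (norm_snd_le _)).trans (hN _ (mem_image_of_mem _ ht.1)))
    have hMh₀ : 0 ≤ Mh := (abs_nonneg _).trans (hMh t ht.1).2
    have hN₀ : 0 ≤ N := (inv_pos.2 hAt).le.trans hinv
    have hgh : |gh t / A t| ≤ Mh * N := by
      rw [abs_div, abs_of_pos hAt, div_eq_mul_inv]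
      exact mul_le_mul (hMh t ht.1).2 hinv (inv_pos.2 hAt).le hMh₀
    have hlow : gh t / A t ≤ (p t).2 := (div_le_iff₀ hAt).2 h₃
    rw [norm_prod_le_iff, Real.norm_eq_abs, Real.norm_eq_abs, abs_le, abs_le]
    refine ⟨⟨?_, ?_⟩, ?_, ?_⟩ <;> linarith [le_abs_self (fh t), (hMh t ht.1).1,
      neg_abs_le (gh t / A t), le_abs_self (g₀ / A t₀), abs_nonneg (g₀ / A t₀),
      mul_nonneg hMh₀ hN₀]
  obtain ⟨P, hP₀, hP⟩ := exists_isIntegralCurveOn_Ici_of_norm_le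
    (fun R => (instantonField_lipschitzOnWith_and_norm_le hcoef R).1)
    (fun R => (instantonField_lipschitzOnWith_and_norm_le hcoef R).2)
    (continuousOn_instantonField hα (fun t ht => (hA t ht).continuousWithinAt) hA₀) hbound
  refine ⟨fun t => (P t).1, fun t => (P t).2 * A t, by simp [hP₀], ?_,
    hP.isInstantonSolutionOn hA hA₀⟩
  simp [hP₀, div_mul_cancel₀ _ (hA₀ t₀ self_mem_Ici)]

theorem IsInstantonSolutionOn.eqOn_Icc {t₀ b : ℝ} {f₂ g₂ : ℝ → ℝ}
    (hcoef : Bornology.IsBounded ((fun t => (α t, A t, (A t)⁻¹)) '' Ici t₀))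
    (hA : ∀ t ∈ Icc t₀ b, HasDerivWithinAt A (A' t) (Icc t₀ b) t) (hA₀ : ∀ t ∈ Icc t₀ b, A t ≠ 0)
    (h₁ : IsInstantonSolutionOn α A A' f g (Icc t₀ b))
    (h₂ : IsInstantonSolutionOn α A A' f₂ g₂ (Icc t₀ b)) (hf : f t₀ = f₂ t₀) (hg : g t₀ = g₂ t₀) :
    ∀ t ∈ Icc t₀ b, f t = f₂ t ∧ g t = g₂ t := by
  intro t ht
  have heq := (h₁.isIntegralCurveOn_div hA hA₀).eqOn_Icc
    (fun R => (instantonField_lipschitzOnWith_and_norm_le hcoef R).1)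
    (h₂.isIntegralCurveOn_div hA hA₀) (by rw [hf, hg]) ht
  simp only [Prod.mk.injEq] at heq
  exact ⟨heq.1, (div_left_inj' (hA₀ t ht)).1 heq.2⟩

theorem IsInstantonSolutionOn.exists_tendsto_gt {t₀ Ghinf : ℝ}
    (hApos : ∀ t ∈ Ici t₀, 0 < A t) (hA : ∀ t ∈ Ici t₀, HasDerivWithinAt A (A' t) (Ici t₀) t)
    (hAmono : MonotoneOn A (Ici t₀)) (hfg : IsInstantonSolutionOn α A A' f g (Ici t₀))
    (hhat : IsInstantonSolutionOn α A A' fh gh (Ici t₀))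
    (hcmp : ∀ t ∈ Ici t₀, 0 ≤ f t ∧ f t ≤ fh t ∧ gh t ≤ g t)
    (hbdd : ∃ M, ∀ t ∈ Ici t₀, g t - gh t ≤ M) (hghlim : Tendsto gh atTop (𝓝 Ghinf))
    (hne : (f t₀, g t₀) ≠ (fh t₀, gh t₀)) :
    ∃ Ginf, Tendsto g atTop (𝓝 Ginf) ∧ Ginf > Ghinf := by
  set ψ := fun t => g t - gh t
  have hψ : ∀ t ∈ Ici t₀,
      HasDerivWithinAt ψ (A' t / A t * ψ t + (fh t ^ 2 - f t ^ 2)) (Ici t₀) t :=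
    fun t ht => ((hfg t ht).2.sub (hhat t ht).2).congr_deriv (by ring)
  have hψmono : MonotoneOn ψ (Ici t₀) := by
    refine monotoneOn_of_hasDerivWithinAt_nonneg
      (f' := fun t => A' t / A t * ψ t + (fh t ^ 2 - f t ^ 2)) (convex_Ici t₀)
      (fun t ht => (hψ t ht).continuousWithinAt) (fun t ht => ?_) (fun t ht => ?_) <;>
      simp only [interior_Ici] at ht ⊢ <;> replace ht := Ioi_subset_Ici_self ht
    · exact (hψ t ht).mono Ioi_subset_Ici_self
    · obtain ⟨hf, hffh, hggh⟩ := hcmp t ht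
      have hA' : 0 ≤ A' t := (hA t ht).nonneg_of_monotoneOn
        (uniqueDiffWithinAt_iff_accPt.1 (uniqueDiffOn_Ici t₀ t ht)) hAmono
      have := div_nonneg hA' (hApos t ht).le
      have := mul_le_mul hffh hffh hf (hf.trans hffh)
      nlinarith
  obtain ⟨L, hL⟩ := hψmono.exists_tendsto_atTop_Ici hbdd
  obtain ⟨t₂, ht₂, hψ₂⟩ : ∃ t₂ ∈ Ici t₀, 0 < ψ t₂ := by
    obtain ⟨hf, hffh, hggh⟩ := hcmp t₀ self_mem_Ici
    rcases hggh.lt_or_eq with hlt | heq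
    · exact ⟨t₀, self_mem_Ici, sub_pos.2 hlt⟩
    -- Otherwise `f t₀ < fh t₀`, so `ψ` leaves `0` with positive slope.
    have hlt : f t₀ < fh t₀ := hffh.lt_of_ne fun h => hne (by rw [h, heq])
    obtain ⟨t₂, ht₂, hψ₂⟩ := exists_gt_of_hasDerivWithinAt_Ici_pos (hψ t₀ self_mem_Ici)
      (by simp only [ψ, heq, sub_self, mul_zero, zero_add]; nlinarith)
    exact ⟨t₂, le_of_lt ht₂, by simpa [ψ, heq] using hψ₂⟩
  refine ⟨L + Ghinf, (hL.add hghlim).congr fun t => by simp [ψ], ?_⟩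
  linarith [hψmono.le_of_tendsto_Ici hL t₂ ht₂]

end Instanton

theorem comparison_completeness_general (t₀ ℓ Ghinf : ℝ)
    (T : EReal)
    (A₃ A₃' α f g fh gh : ℝ → ℝ)
    (hA₃pos : ∀ t ∈ Set.Ici t₀, 0 < A₃ t)
    (hA₃deriv : ∀ t ∈ Set.Ici t₀, HasDerivWithinAt A₃ (A₃' t) (Set.Ici t₀) t)
    (hA₃mono : MonotoneOn A₃ (Set.Ici t₀))
    (hA₃lim : Tendsto A₃ atTop (nhds ℓ))
    (hαcont : ContinuousOn α (Set.Ici t₀))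
    (hαbdd : ∃ M : ℝ, ∀ t ∈ Set.Ici t₀, |α t| ≤ M)
    -- (f̂, ĝ) is a bounded solution on [t₀, ∞) with ĝ → Ĝ_∞
    (hfh : ∀ t ∈ Set.Ici t₀,
      HasDerivWithinAt fh (-(α t) * fh t - fh t * gh t) (Set.Ici t₀) t)
    (hgh : ∀ t ∈ Set.Ici t₀,
      HasDerivWithinAt gh (A₃' t / A₃ t * gh t - (fh t) ^ 2) (Set.Ici t₀) t)
    (hhbdd : ∃ M : ℝ, ∀ t ∈ Set.Ici t₀, |fh t| ≤ M ∧ |gh t| ≤ M)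
    (hghlim : Tendsto gh atTop (nhds Ghinf))
    -- (f, g) is a solution on [t₀, T)
    (hf : ∀ t, t₀ ≤ t → (t : EReal) < T →
      HasDerivWithinAt f (-(α t) * f t - f t * g t) {t : ℝ | t₀ ≤ t ∧ (t : EReal) < T} t)
    (hg : ∀ t, t₀ ≤ t → (t : EReal) < T →
      HasDerivWithinAt g (A₃' t / A₃ t * g t - (f t) ^ 2)
        {t : ℝ | t₀ ≤ t ∧ (t : EReal) < T} t)
    (hne : (f t₀, g t₀) ≠ (fh t₀, gh t₀))
    (hg0 : g t₀ ≥ gh t₀) (hf0 : fh t₀ ≥ f t₀) (hfpos : f t₀ > 0) :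
    ∃ F G : ℝ → ℝ,
      (∀ t, t₀ ≤ t → (t : EReal) < T → F t = f t ∧ G t = g t) ∧
      (∀ t ∈ Set.Ici t₀,
        HasDerivWithinAt F (-(α t) * F t - F t * G t) (Set.Ici t₀) t ∧
        HasDerivWithinAt G (A₃' t / A₃ t * G t - (F t) ^ 2) (Set.Ici t₀) t) ∧
      (∃ M : ℝ, ∀ t ∈ Set.Ici t₀, |F t| ≤ M ∧ |G t| ≤ M) ∧
      ∃ Ginf : ℝ, Tendsto G atTop (nhds Ginf) ∧ Ginf > Ghinf := by
  obtain ⟨Mα, hMα⟩ := hαbdd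
  obtain ⟨Mh, hMh⟩ := hhbdd
  have hAle := hA₃mono.le_of_tendsto_Ici hA₃lim
  have hAIcc (b : ℝ) : ∀ t ∈ Icc t₀ b, HasDerivWithinAt A₃ (A₃' t) (Icc t₀ b) t :=
    fun t ht => (hA₃deriv t ht.1).mono Icc_subset_Ici_self
  have hcoef := isBounded_image_triple_inv hMα (hA₃pos t₀ self_mem_Ici)
    fun t ht => ⟨hA₃mono self_mem_Ici ht ht, hAle t ht⟩
  have hhat : IsInstantonSolutionOn α A₃ A₃' fh gh (Ici t₀) := fun t ht => ⟨hfh t ht, hgh t ht⟩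
  obtain ⟨F, G, hF₀, hG₀, hFG⟩ := exists_isInstantonSolutionOn_Ici hcoef hA₃pos hA₃deriv hαcont
    hhat ⟨Mh, hMh⟩ hfpos.le hf0 hg0
  have hcmp (t : ℝ) (ht : t ∈ Ici t₀) :=
    (hFG.mono Icc_subset_Ici_self).comparison (fun s hs => hA₃pos s hs.1) (hAIcc t)
      (hαcont.mono Icc_subset_Ici_self) (hhat.mono Icc_subset_Ici_self) (hF₀ ▸ hfpos.le)
      (hF₀ ▸ hf0) (hG₀ ▸ hg0) t ⟨ht, le_rfl⟩
  have hbound (t : ℝ) (ht : t ∈ Ici t₀) :=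
    abs_le_of_comparison (hA₃pos t ht) (hAle t ht) (hMh t ht).1 (hMh t ht).2 (hcmp t ht).1
      (hcmp t ht).2.1 (hcmp t ht).2.2.1 (hcmp t ht).2.2.2
  refine ⟨F, G, fun t ht htT => ?_, hFG, ⟨_, hbound⟩, hFG.exists_tendsto_gt hA₃pos hA₃deriv
    hA₃mono hhat (fun t ht => ⟨(hcmp t ht).1, (hcmp t ht).2.1, (hcmp t ht).2.2.1⟩)
    ⟨_, fun t ht => sub_le_sub (abs_le.1 (hbound t ht).2).2 (abs_le.1 (hMh t ht).2).1⟩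
    hghlim (by rwa [hF₀, hG₀])⟩
  have hsub : Icc t₀ t ⊆ {s : ℝ | t₀ ≤ s ∧ (s : EReal) < T} :=
    fun s hs => ⟨hs.1, (EReal.coe_le_coe_iff.2 hs.2).trans_lt htT⟩
  exact (hFG.mono Icc_subset_Ici_self).eqOn_Icc hcoef (hAIcc t) (fun s hs => (hA₃pos s hs.1).ne')
    (fun s hs => ⟨(hf s (hsub hs).1 (hsub hs).2).mono hsub,
      (hg s (hsub hs).1 (hsub hs).2).mono hsub⟩) hF₀ hG₀ t ⟨ht, le_rfl⟩

/-- Let `A₃ : [t₀, ∞) → (0, ∞)` be differentiable and nondecreasing with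
limit `ℓ ∈ (0, ∞)`, and `α` continuous and bounded. Consider the system
`f' = −α f − f g`, `g' = (A₃'/A₃) g − f²`. If `(f̂, ĝ)` is a bounded solution on
`[t₀, ∞)` with `ĝ → Ĝ_∞`, and `(f, g)` is a solution on `[t₀, T)` with distinct data
satisfying `g(t₀) ≥ ĝ(t₀)`, `f̂(t₀) ≥ f(t₀) > 0`, then `(f, g)` extends to a bounded
solution on all of `[t₀, ∞)`, `g` converges to a limit `G_∞`, and `G_∞ > Ĝ_∞`. -/
theorem comparison_completeness (t₀ ℓ Ghinf : ℝ) (hℓ : 0 < ℓ)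
    (T : EReal) (hT : (t₀ : EReal) < T)
    (A₃ A₃' α f g fh gh : ℝ → ℝ)
    (hA₃pos : ∀ t ∈ Set.Ici t₀, 0 < A₃ t)
    (hA₃deriv : ∀ t ∈ Set.Ici t₀, HasDerivWithinAt A₃ (A₃' t) (Set.Ici t₀) t)
    (hA₃mono : MonotoneOn A₃ (Set.Ici t₀))
    (hA₃lim : Tendsto A₃ atTop (nhds ℓ))
    (hαcont : ContinuousOn α (Set.Ici t₀))
    (hαbdd : ∃ M : ℝ, ∀ t ∈ Set.Ici t₀, |α t| ≤ M)
    -- (f̂, ĝ) is a bounded solution on [t₀, ∞) with ĝ → Ĝ_∞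
    (hfh : ∀ t ∈ Set.Ici t₀,
      HasDerivWithinAt fh (-(α t) * fh t - fh t * gh t) (Set.Ici t₀) t)
    (hgh : ∀ t ∈ Set.Ici t₀,
      HasDerivWithinAt gh (A₃' t / A₃ t * gh t - (fh t) ^ 2) (Set.Ici t₀) t)
    (hhbdd : ∃ M : ℝ, ∀ t ∈ Set.Ici t₀, |fh t| ≤ M ∧ |gh t| ≤ M)
    (hghlim : Tendsto gh atTop (nhds Ghinf))
    -- (f, g) is a solution on [t₀, T)
    (hf : ∀ t, t₀ ≤ t → (t : EReal) < T →
      HasDerivWithinAt f (-(α t) * f t - f t * g t) {t : ℝ | t₀ ≤ t ∧ (t : EReal) < T} t)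
    (hg : ∀ t, t₀ ≤ t → (t : EReal) < T →
      HasDerivWithinAt g (A₃' t / A₃ t * g t - (f t) ^ 2)
        {t : ℝ | t₀ ≤ t ∧ (t : EReal) < T} t)
    (hne : (f t₀, g t₀) ≠ (fh t₀, gh t₀))
    (hg0 : g t₀ ≥ gh t₀) (hf0 : fh t₀ ≥ f t₀) (hfpos : f t₀ > 0) :
    ∃ F G : ℝ → ℝ,
      (∀ t, t₀ ≤ t → (t : EReal) < T → F t = f t ∧ G t = g t) ∧
      (∀ t ∈ Set.Ici t₀,
        HasDerivWithinAt F (-(α t) * F t - F t * G t) (Set.Ici t₀) t ∧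
        HasDerivWithinAt G (A₃' t / A₃ t * G t - (F t) ^ 2) (Set.Ici t₀) t) ∧
      (∃ M : ℝ, ∀ t ∈ Set.Ici t₀, |F t| ≤ M ∧ |G t| ≤ M) ∧
      ∃ Ginf : ℝ, Tendsto G atTop (nhds Ginf) ∧ Ginf > Ghinf :=
  comparison_completeness_general t₀ ℓ Ghinf T A₃ A₃' α f g fh gh hA₃pos hA₃deriv hA₃mono hA₃lim
    hαcont hαbdd hfh hgh hhbdd hghlim hf hg hne hg0 hf0 hfpos
end

section
/- Let T₁ > 0 and let P, Q, S, A : (0, T₁] → ℝ be continuous with 2/3 < P(t) < 1, 0 < Q(t) < 1, Q nonincreasing, S(t) > 0 and A(t) > 0 for all t. Let Γ > 0 satisfy Γ² < (2/3)·Q(T₁). Suppose (F, G) solves F'(t) = (F(t)/A(t))·(P(t) − G(t)), G'(t) = S(t)·(Q(t) G(t) − F(t)²) on (0, t₁] for some t₁ ∈ (0, T₁], with 0 ≤ F(t₁) < Γ and 0 < G(t₁) < 2/3. Then 0 ≤ F(t) < Γ and 0 < G(t) < 2/3 for all t ∈ (0, t₁]. -/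
/-!
Backwards from `t₁`, `F` solves the linear equation `F' = ((P - G) / A) F`, so by uniqueness it
either vanishes identically or keeps the sign of `F t₁`; in particular `F ≥ 0`.
The bounds on `G` come from a barrier argument at the largest time `x` at which `G` reaches the
level `2/3` or `0`: as `G` lies strictly between the levels on `(x, t₁]`, its right derivative at
`x` is `≤ 0` at the upper level and `≥ 0` at the lower one. If `G x = 2/3`, then `G < 2/3 < P`
on `(x, t₁]` makes `F` nondecreasing there, so `F x < Γ` and `G' x = S x (2/3 Q x - F x ^ 2) > 0`
because `Γ ^ 2 < 2/3 Q T₁ ≤ 2/3 Q x`. If `G x = 0` and `F > 0`, then `G' x = -S x F x ^ 2 < 0`;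
if instead `F ≡ 0`, the equation for `G` is linear and `G` stays positive.
-/

open Set Filter Topology

theorem eqOn_zero_of_hasDerivWithinAt_mul_self {f c : ℝ → ℝ} {s : Set ℝ} {a b t₀ : ℝ}
    (hs : Icc a b ⊆ s) (hc : ContinuousOn c s)
    (hf : ∀ t ∈ s, HasDerivWithinAt f (c t * f t) s t)
    (ht₀ : t₀ ∈ Icc a b) (hft₀ : f t₀ = 0) : EqOn f 0 (Icc a b) := by
  obtain ⟨C, hC⟩ := isCompact_Icc.exists_bound_of_continuousOn (hc.mono hs)
  have hlip : ∀ t ∈ Icc a b, LipschitzOnWith C.toNNReal (c t * ·) univ := fun t ht ↦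
    ((lipschitzWith_smul (c t)).weaken (by
      rw [← NNReal.coe_le_coe, coe_nnnorm, Real.coe_toNNReal']
      exact (hC t ht).trans (le_max_left _ _))).lipschitzOnWith
  have hf' : ∀ t ∈ Icc a b, HasDerivWithinAt f (c t * f t) (Icc a b) t :=
    fun t ht ↦ (hf t (hs ht)).mono hs
  have hfc : ContinuousOn f (Icc a b) := fun t ht ↦ (hf' t ht).continuousWithinAt
  have hzero (t : ℝ) (u : Set ℝ) :
      HasDerivWithinAt (0 : ℝ → ℝ) (c t * (0 : ℝ → ℝ) t) u t :=
    (hasDerivWithinAt_const t u 0).congr_deriv (mul_zero _).symm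
  rw [← Icc_union_Icc_eq_Icc ht₀.1 ht₀.2]
  refine EqOn.union ?_ ?_
  · have hsub : Icc a t₀ ⊆ Icc a b := Icc_subset_Icc_right ht₀.2
    refine ODE_solution_unique_of_mem_Icc_left
      (fun t ht ↦ hlip t (hsub (Ioc_subset_Icc_self ht))) (hfc.mono hsub)
      (fun t ht ↦ ?_) (fun _ _ ↦ mem_univ _) continuousOn_const
      (fun t _ ↦ hzero t _) (fun _ _ ↦ mem_univ _) hft₀
    exact (hf' t (hsub (Ioc_subset_Icc_self ht))).mono_of_mem_nhdsWithin
      (Icc_mem_nhdsLE_of_mem ⟨ht.1, ht.2.trans ht₀.2⟩)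
  · have hsub : Icc t₀ b ⊆ Icc a b := Icc_subset_Icc_left ht₀.1
    refine ODE_solution_unique_of_mem_Icc_right
      (fun t ht ↦ hlip t (hsub (Ico_subset_Icc_self ht))) (hfc.mono hsub)
      (fun t ht ↦ ?_) (fun _ _ ↦ mem_univ _) continuousOn_const
      (fun t _ ↦ hzero t _) (fun _ _ ↦ mem_univ _) hft₀
    exact (hf' t (hsub (Ico_subset_Icc_self ht))).mono_of_mem_nhdsWithin
      (Icc_mem_nhdsGE_of_mem ⟨ht₀.1.trans ht.1, ht.2⟩)

section Ioc

variable {f c : ℝ → ℝ} {a b : ℝ}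

theorem eq_zero_of_hasDerivWithinAt_mul_self_of_eq_zero (hc : ContinuousOn c (Ioc a b))
    (hf : ∀ t ∈ Ioc a b, HasDerivWithinAt f (c t * f t) (Ioc a b) t) (hb : f b = 0) :
    ∀ t ∈ Ioc a b, f t = 0 := fun _ ht ↦
  eqOn_zero_of_hasDerivWithinAt_mul_self (s := Ioc a b)
    (fun _ hs ↦ ⟨ht.1.trans_le hs.1, hs.2⟩) hc hf ⟨ht.2, le_rfl⟩ hb ⟨le_rfl, ht.2⟩

theorem pos_of_hasDerivWithinAt_mul_self_of_pos (hc : ContinuousOn c (Ioc a b))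
    (hf : ∀ t ∈ Ioc a b, HasDerivWithinAt f (c t * f t) (Ioc a b) t) (hb : 0 < f b) :
    ∀ t ∈ Ioc a b, 0 < f t := by
  intro t ht
  by_contra! hft
  have hsub : Icc t b ⊆ Ioc a b := fun s hs ↦ ⟨ht.1.trans_le hs.1, hs.2⟩
  obtain ⟨u, hu, hfu⟩ := intermediate_value_Icc ht.2
    (fun s hs ↦ (hf s (hsub hs)).continuousWithinAt.mono hsub) ⟨hft, hb.le⟩
  exact hb.ne' (eqOn_zero_of_hasDerivWithinAt_mul_self hsub hc hf hu hfu ⟨ht.2, le_rfl⟩)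

theorem nonneg_of_hasDerivWithinAt_mul_self_of_nonneg (hc : ContinuousOn c (Ioc a b))
    (hf : ∀ t ∈ Ioc a b, HasDerivWithinAt f (c t * f t) (Ioc a b) t) (hb : 0 ≤ f b) :
    ∀ t ∈ Ioc a b, 0 ≤ f t := by
  rcases hb.eq_or_lt with hb | hb
  · exact fun t ht ↦ (eq_zero_of_hasDerivWithinAt_mul_self_of_eq_zero hc hf hb.symm t ht).ge
  · exact fun t ht ↦ (pos_of_hasDerivWithinAt_mul_self_of_pos hc hf hb t ht).le

end Ioc

theorem HasDerivWithinAt.nonpos_of_forall_le {g : ℝ → ℝ} {d x b : ℝ} (hxb : x < b)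
    (hd : HasDerivWithinAt g d (Icc x b) x) (hmax : ∀ y ∈ Icc x b, g y ≤ g x) : d ≤ 0 := by
  have hloc : IsLocalMaxOn g (Icc x b) x := eventually_of_mem self_mem_nhdsWithin hmax
  have hone : (1 : ℝ) ∈ posTangentConeAt (Icc x b) x :=
    one_mem_posTangentConeAt_iff_frequently.2
      ((eventually_mem_set.2 (Ioc_mem_nhdsGT hxb)).frequently.mono
        fun _ hy ↦ Ioc_subset_Icc_self hy)
  simpa using hloc.hasFDerivWithinAt_nonpos hd.hasFDerivWithinAt hone

theorem lt_of_deriv_pos_at_last_touch {g g' : ℝ → ℝ} {a b L : ℝ}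
    (hg : ∀ x ∈ Icc a b, HasDerivWithinAt g (g' x) (Icc a b) x) (hb : g b < L)
    (htouch : ∀ x ∈ Ico a b, g x = L → (∀ y ∈ Ioc x b, g y < L) → 0 < g' x) :
    ∀ x ∈ Icc a b, g x < L := by
  by_contra! hex
  have hgc : ContinuousOn g (Icc a b) := fun x hx ↦ (hg x hx).continuousWithinAt
  obtain ⟨x, ⟨hxI, hLx⟩, hxmax⟩ : ∃ x, IsGreatest (Icc a b ∩ g ⁻¹' Ici L) x :=
    (isCompact_Icc.of_isClosed_subset (hgc.preimage_isClosed_of_isClosed isClosed_Icc isClosed_Ici)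
      inter_subset_left).exists_isGreatest hex
  have habove : ∀ y ∈ Ioc x b, g y < L := fun y hy ↦
    lt_of_not_ge fun hLy ↦ hy.1.not_ge (hxmax ⟨⟨hxI.1.trans hy.1.le, hy.2⟩, hLy⟩)
  have hxb : x < b := hxI.2.lt_of_ne (by rintro rfl; exact hb.not_ge hLx)
  have hgx : g x = L := by
    refine le_antisymm ?_ hLx
    have hcont : ContinuousWithinAt g (Ioc x b) x :=
      (hgc x hxI).mono fun y hy ↦ ⟨hxI.1.trans hy.1.le, hy.2⟩
    rw [ContinuousWithinAt, nhdsWithin_Ioc_eq_nhdsGT hxb] at hcont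
    exact le_of_tendsto hcont (eventually_of_mem (Ioc_mem_nhdsGT hxb) fun y hy ↦ (habove y hy).le)
  have hderiv := ((hg x hxI).mono (Icc_subset_Icc_left hxI.1)).nonpos_of_forall_le hxb
    fun y hy ↦ hy.1.eq_or_lt.elim (fun h ↦ h ▸ le_rfl)
      fun h ↦ hgx ▸ (habove y ⟨h, hy.2⟩).le
  exact (htouch x ⟨hxI.1, hxb⟩ hgx habove).not_ge hderiv

section Instanton

variable {P Q S A F G : ℝ → ℝ} {a b : ℝ}

theorem monotoneOn_of_hasDerivWithinAt_div_mul_sub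
    (hF : ∀ t ∈ Icc a b, HasDerivWithinAt F (F t / A t * (P t - G t)) (Icc a b) t)
    (hA : ∀ t ∈ Ioo a b, 0 < A t) (hFnn : ∀ t ∈ Ioo a b, 0 ≤ F t)
    (hGP : ∀ t ∈ Ioo a b, G t ≤ P t) : MonotoneOn F (Icc a b) := by
  refine monotoneOn_of_hasDerivWithinAt_nonneg (f' := fun t ↦ F t / A t * (P t - G t))
    (convex_Icc a b) (fun t ht ↦ (hF t ht).continuousWithinAt) ?_ ?_ <;> rw [interior_Icc]
  · exact fun t ht ↦ (hF t (Ioo_subset_Icc_self ht)).mono Ioo_subset_Icc_self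
  · exact fun t ht ↦ mul_nonneg (div_nonneg (hFnn t ht) (hA t ht).le) (sub_nonneg.2 (hGP t ht))

theorem lt_two_thirds_and_lt_of_hasDerivWithinAt_instanton {q Γ : ℝ}
    (hF : ∀ t ∈ Icc a b, HasDerivWithinAt F (F t / A t * (P t - G t)) (Icc a b) t)
    (hG : ∀ t ∈ Icc a b, HasDerivWithinAt G (S t * (Q t * G t - F t ^ 2)) (Icc a b) t)
    (hP : ∀ t ∈ Icc a b, 2 / 3 < P t) (hQ : ∀ t ∈ Icc a b, q ≤ Q t)
    (hS : ∀ t ∈ Icc a b, 0 < S t) (hA : ∀ t ∈ Icc a b, 0 < A t)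
    (hFnn : ∀ t ∈ Icc a b, 0 ≤ F t) (hΓ : Γ ^ 2 < 2 / 3 * q) (hFb : F b < Γ)
    (hGb : G b < 2 / 3) : ∀ t ∈ Icc a b, G t < 2 / 3 ∧ F t < Γ := by
  have hFlt : ∀ x ∈ Icc a b, (∀ y ∈ Ioo x b, G y < 2 / 3) → F x < Γ := by
    intro x hx hGy
    have hsub : Icc x b ⊆ Icc a b := Icc_subset_Icc_left hx.1
    have hmono : MonotoneOn F (Icc x b) :=
      monotoneOn_of_hasDerivWithinAt_div_mul_sub (fun t ht ↦ (hF t (hsub ht)).mono hsub)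
        (fun t ht ↦ hA t (hsub (Ioo_subset_Icc_self ht)))
        (fun t ht ↦ hFnn t (hsub (Ioo_subset_Icc_self ht)))
        (fun t ht ↦ (hGy t ht).le.trans (hP t (hsub (Ioo_subset_Icc_self ht))).le)
    exact (hmono ⟨le_rfl, hx.2⟩ ⟨hx.2, le_rfl⟩ hx.2).trans_lt hFb
  have hGlt : ∀ t ∈ Icc a b, G t < 2 / 3 := by
    refine lt_of_deriv_pos_at_last_touch hG hGb fun x hx hGx habove ↦ ?_
    have hxI : x ∈ Icc a b := Ico_subset_Icc_self hx
    have hFx := hFlt x hxI fun y hy ↦ habove y (Ioo_subset_Ioc_self hy)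
    have hFx2 : F x ^ 2 < Γ ^ 2 := pow_lt_pow_left₀ hFx (hFnn x hxI) two_ne_zero
    rw [hGx]
    exact mul_pos (hS x hxI) (by nlinarith [hQ x hxI])
  exact fun t ht ↦
    ⟨hGlt t ht, hFlt t ht fun y hy ↦ hGlt y ⟨ht.1.trans hy.1.le, hy.2.le⟩⟩

theorem pos_of_hasDerivWithinAt_instanton {c : ℝ → ℝ} (hc : ContinuousOn c (Ioc a b))
    (hSQ : ContinuousOn (fun t ↦ S t * Q t) (Ioc a b))
    (hF : ∀ t ∈ Ioc a b, HasDerivWithinAt F (c t * F t) (Ioc a b) t)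
    (hG : ∀ t ∈ Ioc a b, HasDerivWithinAt G (S t * (Q t * G t - F t ^ 2)) (Ioc a b) t)
    (hS : ∀ t ∈ Ioc a b, 0 < S t) (hFb : 0 ≤ F b) (hGb : 0 < G b) :
    ∀ t ∈ Ioc a b, 0 < G t := by
  rcases hFb.eq_or_lt with hFb | hFb
  · have hF0 := eq_zero_of_hasDerivWithinAt_mul_self_of_eq_zero hc hF hFb.symm
    refine pos_of_hasDerivWithinAt_mul_self_of_pos hSQ (fun t ht ↦ (hG t ht).congr_deriv ?_) hGb
    rw [hF0 t ht]
    ring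
  · have hFpos := pos_of_hasDerivWithinAt_mul_self_of_pos hc hF hFb
    intro t ht
    have hsub : Icc t b ⊆ Ioc a b := fun s hs ↦ ⟨ht.1.trans_le hs.1, hs.2⟩
    refine neg_neg_iff_pos.1 <| lt_of_deriv_pos_at_last_touch
      (fun s hs ↦ ((hG s (hsub hs)).mono hsub).neg) (neg_neg_iff_pos.2 hGb)
      (fun x hx hGx _ ↦ ?_) t ⟨le_rfl, ht.2⟩
    rw [neg_eq_zero.1 hGx, mul_zero, zero_sub, mul_neg, neg_neg]
    have hxI := hsub (Ico_subset_Icc_self hx)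
    exact mul_pos (hS x hxI) (pow_pos (hFpos x hxI) 2)

end Instanton

theorem backward_invariance_general (T₁ : ℝ)
    (P Q S A F G : ℝ → ℝ)
    (hPcont : ContinuousOn P (Set.Ioc 0 T₁)) (hQcont : ContinuousOn Q (Set.Ioc 0 T₁))
    (hScont : ContinuousOn S (Set.Ioc 0 T₁)) (hAcont : ContinuousOn A (Set.Ioc 0 T₁))
    (hP : ∀ t ∈ Set.Ioc 0 T₁, 2 / 3 < P t ∧ P t < 1)
    (hQmono : AntitoneOn Q (Set.Ioc 0 T₁))
    (hS : ∀ t ∈ Set.Ioc 0 T₁, 0 < S t)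
    (hA : ∀ t ∈ Set.Ioc 0 T₁, 0 < A t)
    (Γ : ℝ) (hΓ2 : Γ ^ 2 < (2 / 3) * Q T₁)
    (t₁ : ℝ) (ht₁ : t₁ ∈ Set.Ioc 0 T₁)
    (hF : ∀ t ∈ Set.Ioc 0 t₁,
      HasDerivWithinAt F (F t / A t * (P t - G t)) (Set.Ioc 0 t₁) t)
    (hG : ∀ t ∈ Set.Ioc 0 t₁,
      HasDerivWithinAt G (S t * (Q t * G t - (F t) ^ 2)) (Set.Ioc 0 t₁) t)
    (hF1 : 0 ≤ F t₁ ∧ F t₁ < Γ) (hG1 : 0 < G t₁ ∧ G t₁ < 2 / 3) :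
    ∀ t ∈ Set.Ioc 0 t₁, (0 ≤ F t ∧ F t < Γ) ∧ (0 < G t ∧ G t < 2 / 3) := by
  intro t ht
  have hI : Ioc 0 t₁ ⊆ Ioc 0 T₁ := Ioc_subset_Ioc_right ht₁.2
  have hJ : Icc t t₁ ⊆ Ioc 0 t₁ := fun s hs ↦ ⟨ht.1.trans_le hs.1, hs.2⟩
  have hc : ContinuousOn (fun s ↦ (P s - G s) / A s) (Ioc 0 t₁) :=
    ((hPcont.mono hI).sub fun s hs ↦ (hG s hs).continuousWithinAt).div (hAcont.mono hI)
      fun s hs ↦ (hA s (hI hs)).ne'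
  have hFlin (s) (hs : s ∈ Ioc 0 t₁) :
      HasDerivWithinAt F ((P s - G s) / A s * F s) (Ioc 0 t₁) s :=
    (hF s hs).congr_deriv (by ring)
  have hFnn := nonneg_of_hasDerivWithinAt_mul_self_of_nonneg hc hFlin hF1.1
  have hGpos := pos_of_hasDerivWithinAt_instanton hc ((hScont.mul hQcont).mono hI) hFlin hG
    (fun s hs ↦ hS s (hI hs)) hF1.1 hG1.1
  have hJT : Icc t t₁ ⊆ Ioc 0 T₁ := hJ.trans hI
  have hbounds := lt_two_thirds_and_lt_of_hasDerivWithinAt_instanton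
    (fun s hs ↦ (hF s (hJ hs)).mono hJ) (fun s hs ↦ (hG s (hJ hs)).mono hJ)
    (fun s hs ↦ (hP s (hJT hs)).1)
    (fun s hs ↦ hQmono (hJT hs) ⟨ht₁.1.trans_le ht₁.2, le_rfl⟩ ((hJ hs).2.trans ht₁.2))
    (fun s hs ↦ hS s (hJT hs)) (fun s hs ↦ hA s (hJT hs)) (fun s hs ↦ hFnn s (hJ hs))
    hΓ2 hF1.2 hG1.2 t ⟨le_rfl, ht.2⟩
  exact ⟨⟨hFnn t ht, hbounds.2⟩, hGpos t ht, hbounds.1⟩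

/-- Backward-invariance lemma. Let `T₁ > 0`, `P, Q, S, A : (0, T₁] → ℝ`
continuous with `2/3 < P < 1`, `0 < Q < 1`, `Q` nonincreasing, `S, A > 0`, and let
`Γ > 0` satisfy `Γ² < (2/3)·Q(T₁)`. If `(F, G)` solves
`F' = (F/A)(P − G)`, `G' = S(Q G − F²)` on `(0, t₁]` with `0 ≤ F(t₁) < Γ` and
`0 < G(t₁) < 2/3`, then `0 ≤ F < Γ` and `0 < G < 2/3` on all of `(0, t₁]`. -/
theorem backward_invariance (T₁ : ℝ) (hT₁ : 0 < T₁)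
    (P Q S A F G : ℝ → ℝ)
    (hPcont : ContinuousOn P (Set.Ioc 0 T₁)) (hQcont : ContinuousOn Q (Set.Ioc 0 T₁))
    (hScont : ContinuousOn S (Set.Ioc 0 T₁)) (hAcont : ContinuousOn A (Set.Ioc 0 T₁))
    (hP : ∀ t ∈ Set.Ioc 0 T₁, 2 / 3 < P t ∧ P t < 1)
    (hQ : ∀ t ∈ Set.Ioc 0 T₁, 0 < Q t ∧ Q t < 1)
    (hQmono : AntitoneOn Q (Set.Ioc 0 T₁))
    (hS : ∀ t ∈ Set.Ioc 0 T₁, 0 < S t)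
    (hA : ∀ t ∈ Set.Ioc 0 T₁, 0 < A t)
    (Γ : ℝ) (hΓ : 0 < Γ) (hΓ2 : Γ ^ 2 < (2 / 3) * Q T₁)
    (t₁ : ℝ) (ht₁ : t₁ ∈ Set.Ioc 0 T₁)
    (hF : ∀ t ∈ Set.Ioc 0 t₁,
      HasDerivWithinAt F (F t / A t * (P t - G t)) (Set.Ioc 0 t₁) t)
    (hG : ∀ t ∈ Set.Ioc 0 t₁,
      HasDerivWithinAt G (S t * (Q t * G t - (F t) ^ 2)) (Set.Ioc 0 t₁) t)
    (hF1 : 0 ≤ F t₁ ∧ F t₁ < Γ) (hG1 : 0 < G t₁ ∧ G t₁ < 2 / 3) :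
    ∀ t ∈ Set.Ioc 0 t₁, (0 ≤ F t ∧ F t < Γ) ∧ (0 < G t ∧ G t < 2 / 3) :=
  backward_invariance_general T₁ P Q S A F G hPcont hQcont hScont hAcont hP hQmono hS hA Γ hΓ2 t₁
    ht₁ hF hG hF1 hG1
end

section
/- Let c > 0 and let a₁, a₃ : J → ℝ be differentiable on an interval J ⊆ (c, ∞), satisfying (η − c)² a₁'(η) = η a₁(η) (a₃(η) − 1) and η a₃'(η) = a₁(η)² − a₃(η) for all η ∈ J. Then the function η ↦ (η − c)² a₁(η)² − (η a₃(η) − c)² is constant on J. -/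
/-!
Differentiating `(η - c)² a₁² - (η a₃ - c)²` and substituting both equations, every term carries
the factor `a₁²` and the coefficients cancel: `2(η - c) + 2η(a₃ - 1) - 2(η a₃ - c) = 0`.
A function with vanishing derivative on an interval is constant.
-/

theorem Convex.is_const_of_hasDerivWithinAt_zero {𝕜 G : Type*} [RCLike 𝕜]
    [NormedAddCommGroup G] [NormedSpace 𝕜 G] {f : 𝕜 → G} {s : Set 𝕜} (hs : Convex ℝ s)
    (hf : ∀ x ∈ s, HasDerivWithinAt f 0 s x) {x y : 𝕜} (hx : x ∈ s) (hy : y ∈ s) :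
    f x = f y := by
  have := hs.norm_image_sub_le_of_norm_hasDerivWithin_le hf (fun _ _ => norm_zero.le) hx hy
  rwa [zero_mul, norm_le_zero_iff, sub_eq_zero, eq_comm] at this

def instantonInvariant (c : ℝ) (a₁ a₃ : ℝ → ℝ) (η : ℝ) : ℝ :=
  (η - c) ^ 2 * a₁ η ^ 2 - (η * a₃ η - c) ^ 2

theorem HasDerivWithinAt.instantonInvariant {c η d₁ d₃ : ℝ} {a₁ a₃ : ℝ → ℝ} {s : Set ℝ}
    (h₁ : HasDerivWithinAt a₁ d₁ s η) (h₃ : HasDerivWithinAt a₃ d₃ s η) :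
    HasDerivWithinAt (instantonInvariant c a₁ a₃)
      (2 * (η - c) * a₁ η ^ 2 + (η - c) ^ 2 * (2 * a₁ η * d₁)
        - 2 * (η * a₃ η - c) * (a₃ η + η * d₃)) s η := by
  have hid : HasDerivWithinAt (fun x : ℝ => x) 1 s η := hasDerivWithinAt_id η s
  refine (((hid.sub_const c).pow 2).mul (h₁.pow 2)).sub
    (((hid.mul h₃).sub_const c).pow 2) |>.congr_deriv ?_
  simp only [Pi.pow_apply, Pi.mul_apply]
  ring

theorem hasDerivWithinAt_instantonInvariant_zero {c η d₁ d₃ : ℝ} {a₁ a₃ : ℝ → ℝ} {s : Set ℝ}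
    (h₁ : HasDerivWithinAt a₁ d₁ s η) (h₃ : HasDerivWithinAt a₃ d₃ s η)
    (heq₁ : (η - c) ^ 2 * d₁ = η * a₁ η * (a₃ η - 1)) (heq₃ : η * d₃ = a₁ η ^ 2 - a₃ η) :
    HasDerivWithinAt (instantonInvariant c a₁ a₃) 0 s η := by
  convert h₁.instantonInvariant h₃ using 1
  linear_combination (-2 * a₁ η) * heq₁ + 2 * (η * a₃ η - c) * heq₃

theorem conserved_quantity_general (c : ℝ)
    (J : Set ℝ) (hJconn : J.OrdConnected)
    (a₁ a₃ a₁' a₃' : ℝ → ℝ)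
    (ha₁ : ∀ η ∈ J, HasDerivWithinAt a₁ (a₁' η) J η)
    (ha₃ : ∀ η ∈ J, HasDerivWithinAt a₃ (a₃' η) J η)
    (heq₁ : ∀ η ∈ J, (η - c) ^ 2 * a₁' η = η * a₁ η * (a₃ η - 1))
    (heq₃ : ∀ η ∈ J, η * a₃' η = (a₁ η) ^ 2 - a₃ η) :
    ∀ η₁ ∈ J, ∀ η₂ ∈ J,
      (η₁ - c) ^ 2 * (a₁ η₁) ^ 2 - (η₁ * a₃ η₁ - c) ^ 2 =
      (η₂ - c) ^ 2 * (a₁ η₂) ^ 2 - (η₂ * a₃ η₂ - c) ^ 2 := fun _ h₁ _ h₂ =>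
  hJconn.convex.is_const_of_hasDerivWithinAt_zero (f := instantonInvariant c a₁ a₃)
    (fun η hη => hasDerivWithinAt_instantonInvariant_zero (ha₁ η hη) (ha₃ η hη)
      (heq₁ η hη) (heq₃ η hη)) h₁ h₂

/-- Let `c > 0` and `a₁, a₃` differentiable on an interval `J ⊆ (c, ∞)`
satisfying `(η − c)² a₁' = η a₁ (a₃ − 1)` and `η a₃' = a₁² − a₃`. Then
`η ↦ (η − c)² a₁(η)² − (η a₃(η) − c)²` is constant on `J`. -/
theorem conserved_quantity (c : ℝ) (hc : 0 < c)
    (J : Set ℝ) (hJconn : J.OrdConnected) (hJ : J ⊆ Set.Ioi c)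
    (a₁ a₃ a₁' a₃' : ℝ → ℝ)
    (ha₁ : ∀ η ∈ J, HasDerivWithinAt a₁ (a₁' η) J η)
    (ha₃ : ∀ η ∈ J, HasDerivWithinAt a₃ (a₃' η) J η)
    (heq₁ : ∀ η ∈ J, (η - c) ^ 2 * a₁' η = η * a₁ η * (a₃ η - 1))
    (heq₃ : ∀ η ∈ J, η * a₃' η = (a₁ η) ^ 2 - a₃ η) :
    ∀ η₁ ∈ J, ∀ η₂ ∈ J,
      (η₁ - c) ^ 2 * (a₁ η₁) ^ 2 - (η₁ * a₃ η₁ - c) ^ 2 =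
      (η₂ - c) ^ 2 * (a₁ η₂) ^ 2 - (η₂ * a₃ η₂ - c) ^ 2 :=
  conserved_quantity_general c J hJconn a₁ a₃ a₁' a₃' ha₁ ha₃ heq₁ heq₃
end

section
/- Let c > 0, C > 0, D > 0. Define on (c, ∞) the functions a₁(η) = (C/(η − c)) · csch(C/(η − c) + D) and a₃(η) = (1/η) · ( c + C·coth(C/(η − c) + D) ). Then (a₁, a₃) satisfies (η − c)² a₁'(η) = η a₁(η)(a₃(η) − 1) and η a₃'(η) = a₁(η)² − a₃(η) for all η ∈ (c, ∞). -/
/-!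
Both equations are direct computations: with `u = C/(η - c) + D` one has
`u' = -C/(η - c)²` and `(coth u)' = -u' csch² u`, so `η a₃' = -a₃ + C² csch² u/(η - c)² = a₁² - a₃`,
while `(η - c)² a₁' = -C csch u + C² coth u csch u/(η - c)` is `η a₁ (a₃ - 1)` after
expanding `η a₃ = c + C coth u`.
-/

open Real

theorem HasDerivAt.cosh_div_sinh {f : ℝ → ℝ} {f' x : ℝ} (hf : HasDerivAt f f' x)
    (hx : Real.sinh (f x) ≠ 0) :
    HasDerivAt (fun y => Real.cosh (f y) / Real.sinh (f y)) (-f' / Real.sinh (f x) ^ 2) x := by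
  refine (hf.cosh.fun_div hf.sinh hx).congr_deriv ?_
  congr 1
  linear_combination (-f') * Real.cosh_sq (f x)

theorem hasDerivAt_const_div_sub (C c : ℝ) {x : ℝ} (hx : x ≠ c) :
    HasDerivAt (fun y => C / (y - c)) (-C / (x - c) ^ 2) x := by
  refine ((hasDerivAt_const x C).fun_div ((hasDerivAt_id' x).sub_const c)
    (sub_ne_zero.2 hx)).congr_deriv ?_
  congr 1
  simp

namespace TaubNUT

noncomputable abbrev a₁ (c C D η : ℝ) : ℝ := (C / (η - c)) * (sinh (C / (η - c) + D))⁻¹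

noncomputable abbrev a₃ (c C D η : ℝ) : ℝ :=
  (1 / η) * (c + C * (cosh (C / (η - c) + D) / sinh (C / (η - c) + D)))

theorem sinh_ne_zero_of_lt {c C D η : ℝ} (hC : 0 < C) (hD : 0 < D) (hη : c < η) :
    sinh (C / (η - c) + D) ≠ 0 :=
  (sinh_pos_iff.2 (add_pos (div_pos hC (sub_pos.2 hη)) hD)).ne'

theorem hasDerivAt_a₁ {c C D η : ℝ} (hc : 0 < c) (hC : 0 < C) (hD : 0 < D) (hη : c < η) :
    HasDerivAt (a₁ c C D) (η * a₁ c C D η * (a₃ c C D η - 1) / (η - c) ^ 2) η := by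
  have hx := hasDerivAt_const_div_sub C c hη.ne'
  have hS := sinh_ne_zero_of_lt hC hD hη
  refine (hx.fun_mul ((hx.add_const D).sinh.fun_inv hS)).congr_deriv ?_
  have hη₀ := (hc.trans hη).ne'
  have hηc := sub_ne_zero.2 hη.ne'
  unfold a₁ a₃
  -- otherwise `field_simp` rewrites the argument of `sinh` and can no longer use `hS`
  generalize sinh (C / (η - c) + D) = S at hS ⊢
  generalize cosh (C / (η - c) + D) = K
  field_simp
  ring

theorem hasDerivAt_a₃ {c C D η : ℝ} (hc : 0 < c) (hC : 0 < C) (hD : 0 < D) (hη : c < η) :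
    HasDerivAt (a₃ c C D) ((a₁ c C D η ^ 2 - a₃ c C D η) / η) η := by
  have hu := (hasDerivAt_const_div_sub C c hη.ne').add_const D
  have hS := sinh_ne_zero_of_lt hC hD hη
  have hη₀ := (hc.trans hη).ne'
  refine (((hasDerivAt_const η 1).fun_div (hasDerivAt_id' η) hη₀).fun_mul
    (((hu.cosh_div_sinh hS).const_mul C).const_add c)).congr_deriv ?_
  have hηc := sub_ne_zero.2 hη.ne'
  unfold a₁ a₃
  generalize sinh (C / (η - c) + D) = S at hS ⊢
  generalize cosh (C / (η - c) + D) = K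
  field_simp
  ring

end TaubNUT

/-- Let `c > 0`, `C > 0`, `D > 0`, and define on `(c, ∞)` the functions
`a₁(η) = (C/(η − c))·csch(C/(η − c) + D)` and
`a₃(η) = (1/η)·(c + C·coth(C/(η − c) + D))`. Then `(a₁, a₃)` satisfies
`(η − c)² a₁' = η a₁ (a₃ − 1)` and `η a₃' = a₁² − a₃` on `(c, ∞)`. -/
theorem taubnut_asd_general_solution (c C D : ℝ) (hc : 0 < c) (hC : 0 < C) (hD : 0 < D) :
    ∀ η ∈ Set.Ioi c,
      DifferentiableAt ℝ
        (fun η : ℝ => (C / (η - c)) * (Real.sinh (C / (η - c) + D))⁻¹) η ∧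
      DifferentiableAt ℝ
        (fun η : ℝ => (1 / η) * (c + C * (Real.cosh (C / (η - c) + D) /
          Real.sinh (C / (η - c) + D)))) η ∧
      (η - c) ^ 2 *
          deriv (fun η : ℝ => (C / (η - c)) * (Real.sinh (C / (η - c) + D))⁻¹) η =
        η * ((C / (η - c)) * (Real.sinh (C / (η - c) + D))⁻¹) *
          ((1 / η) * (c + C * (Real.cosh (C / (η - c) + D) /
            Real.sinh (C / (η - c) + D))) - 1) ∧
      η * deriv (fun η : ℝ => (1 / η) * (c + C * (Real.cosh (C / (η - c) + D) /
            Real.sinh (C / (η - c) + D)))) η =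
        ((C / (η - c)) * (Real.sinh (C / (η - c) + D))⁻¹) ^ 2 -
          (1 / η) * (c + C * (Real.cosh (C / (η - c) + D) /
            Real.sinh (C / (η - c) + D))) := by
  intro η hη
  have h₁ := TaubNUT.hasDerivAt_a₁ hc hC hD hη
  have h₃ := TaubNUT.hasDerivAt_a₃ hc hC hD hη
  refine ⟨h₁.differentiableAt, h₃.differentiableAt, ?_, ?_⟩
  · rw [h₁.deriv]
    exact mul_div_cancel₀ _ (pow_ne_zero 2 (sub_ne_zero.2 (ne_of_gt hη)))
  · rw [h₃.deriv]
    exact mul_div_cancel₀ _ (hc.trans hη).ne'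
end

section
/- Let c > 0 and B ≥ 0. Define on (c, ∞) the functions a₁(η) = 1/(1 + B(η − c)) and a₃(η) = (1/η) · ( c + (η − c)/(1 + B(η − c)) ). Then (a₁, a₃) satisfies (η − c)² a₁'(η) = η a₁(η)(a₃(η) − 1) and η a₃'(η) = a₁(η)² − a₃(η) for all η ∈ (c, ∞). -/
/-! Both equations are rational identities in `η` away from the zeros of `η` and of
`u = 1 + B (η - c)`. The first one is the computation
`η a₃ - η = (η - c)(1/u - 1) = -B (η - c)² / u = (η - c)² a₁' / a₁`. -/

section EtesiHausel

variable {c B η : ℝ}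

theorem hasDerivAt_one_add_mul_sub : HasDerivAt (fun x : ℝ => 1 + B * (x - c)) B η := by
  simpa using (((hasDerivAt_id η).sub_const c).const_mul B).const_add 1

theorem hasDerivAt_inv_one_add_mul_sub (hu : 1 + B * (η - c) ≠ 0) :
    HasDerivAt (fun x : ℝ => (1 + B * (x - c))⁻¹) (-B / (1 + B * (η - c)) ^ 2) η := by
  simpa [Pi.inv_def] using hasDerivAt_one_add_mul_sub.inv hu

theorem hasDerivAt_etesiHausel_a₃ (hu : 1 + B * (η - c) ≠ 0) (hη : η ≠ 0) :
    HasDerivAt (fun x : ℝ => (1 / x) * (c + (x - c) / (1 + B * (x - c))))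
      (-1 / η ^ 2 * (c + (η - c) / (1 + B * (η - c))) +
        1 / η * ((1 * (1 + B * (η - c)) - (η - c) * B) / (1 + B * (η - c)) ^ 2)) η := by
  have hInv : HasDerivAt (fun x : ℝ => 1 / x) (-1 / η ^ 2) η := by
    simpa [Pi.inv_def] using (hasDerivAt_id η).inv hη
  exact hInv.mul ((((hasDerivAt_id η).sub_const c).div hasDerivAt_one_add_mul_sub hu).const_add c)

end EtesiHausel

/-- Let `c > 0` and `B ≥ 0`, and define on `(c, ∞)` the functions
`a₁(η) = 1/(1 + B(η − c))` and `a₃(η) = (1/η)·(c + (η − c)/(1 + B(η − c)))`. Then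
`(a₁, a₃)` satisfies `(η − c)² a₁' = η a₁ (a₃ − 1)` and `η a₃' = a₁² − a₃`
on `(c, ∞)`. -/
theorem etesi_hausel_solution (c B : ℝ) (hc : 0 < c) (hB : 0 ≤ B) :
    ∀ η ∈ Set.Ioi c,
      DifferentiableAt ℝ (fun η : ℝ => (1 + B * (η - c))⁻¹) η ∧
      DifferentiableAt ℝ
        (fun η : ℝ => (1 / η) * (c + (η - c) / (1 + B * (η - c)))) η ∧
      (η - c) ^ 2 * deriv (fun η : ℝ => (1 + B * (η - c))⁻¹) η =
        η * (1 + B * (η - c))⁻¹ *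
          ((1 / η) * (c + (η - c) / (1 + B * (η - c))) - 1) ∧
      η * deriv (fun η : ℝ => (1 / η) * (c + (η - c) / (1 + B * (η - c)))) η =
        ((1 + B * (η - c))⁻¹) ^ 2 -
          (1 / η) * (c + (η - c) / (1 + B * (η - c))) := by
  intro η (hη : c < η)
  have hη0 : η ≠ 0 := (hc.trans hη).ne'
  have hu : 1 + B * (η - c) ≠ 0 := by
    have : 0 ≤ B * (η - c) := mul_nonneg hB (sub_nonneg.2 hη.le)
    positivity
  have ha₁ := hasDerivAt_inv_one_add_mul_sub hu
  have ha₃ := hasDerivAt_etesiHausel_a₃ hu hη0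
  refine ⟨ha₁.differentiableAt, ha₃.differentiableAt, ?_, ?_⟩
  · rw [ha₁.deriv]
    have hu' : 1 + (η - c) * B ≠ 0 := by rwa [mul_comm]
    field_simp
    ring
  · rw [ha₃.deriv]
    field_simp
    ring
end
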